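/- arXiv:2405.04910 — 3 statements merged into one kernel-verified Lean document; each statement's English description precedes it below -/
import Mathlib

section
/- Fix positive integers S and K with 4K ≤ S. For each arm k ∈ {1,…,K} let (D_{k,n})_{n=1}^S be random variables taking values in [0,1], i.i.d. with mean μ_k within each arm, the whole family being jointly independent. For each k ∈ {1,…,K} and s ∈ {1,…,S} let N_{k,s} be an arbitrary random variable on the same probability space with values in {0,1,…,S}. Then Σ_{k=1}^K Σ_{s=1}^S E[ (L_k(N_{k,s}) − μ_k)⁺ ] ≤ 6√(SK), where x⁺ = max(x,0). -/
open MeasureTheory ProbabilityTheory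

/-- `log₊(x) = log x` if `x ≥ 1`, and `0` otherwise. -/
noncomputable def logPlus (x : ℝ) : ℝ := if 1 ≤ x then Real.log x else 0

/-- The sample mean of the first `n` observations of arm `k`. -/
noncomputable def sampleMean {Ω : Type*} (D : ℕ → ℕ → Ω → ℝ) (k n : ℕ) (ω : Ω) : ℝ :=
  (∑ j ∈ Finset.Icc 1 n, D k j ω) / n

/-- The lower confidence bound `L_k(n) = max(0, X̄_k(n) − β_n)` with `L_k(0) = 0`,
where `β_n = √(log₊(SK/n)/n)`. -/
noncomputable def lcbL {Ω : Type*} (S K : ℕ) (D : ℕ → ℕ → Ω → ℝ) (k n : ℕ) (ω : Ω) : ℝ :=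
  if n = 0 then 0
  else max 0 (sampleMean D k n ω - Real.sqrt (logPlus ((S : ℝ) * K / n) / n))


open MeasureTheory ProbabilityTheory Finset

namespace LcbAux

lemma hoeffding_core_nonneg (p : ℝ) (hp0 : 0 ≤ p) (hp1 : p ≤ 1) (l : ℝ) (hl : 0 ≤ l) :
    Real.exp (-(l*p)) * (1 - p + p * Real.exp l) ≤ Real.exp (l^2/8) := by
  set h : ℝ → ℝ := fun u => 1 - p + p * Real.exp u with hh
  have hpos : ∀ u : ℝ, 0 ≤ u → 0 < h u := by
    intro u hu
    have : (1:ℝ) ≤ Real.exp u := Real.one_le_exp hu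
    have : p * 1 ≤ p * Real.exp u := by nlinarith
    simp only [hh]; nlinarith
  have hd : ∀ u : ℝ, HasDerivAt h (p * Real.exp u) u := by
    intro u
    exact ((Real.hasDerivAt_exp u).const_mul p).const_add (1 - p)
  -- φ u := p * exp u / h u - p,  ψ u := u/4 - φ u is monotone on [0,∞)
  set φ : ℝ → ℝ := fun u => p * Real.exp u / h u - p with hφ
  have hdφ : ∀ u : ℝ, 0 ≤ u →
      HasDerivAt φ (p * Real.exp u * (1 - p) / (h u)^2) u := by
    intro u hu
    have hne : h u ≠ 0 := (hpos u hu).ne'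
    have h1 : HasDerivAt (fun u => p * Real.exp u) (p * Real.exp u) u :=
      (Real.hasDerivAt_exp u).const_mul p
    have h2 := (h1.div (hd u) hne)
    have heq : (p * Real.exp u * h u - p * Real.exp u * (p * Real.exp u)) / (h u)^2
        = p * Real.exp u * (1 - p) / (h u)^2 := by
      rw [div_eq_div_iff (by positivity) (by positivity)]
      simp only [hh]; ring
    rw [heq] at h2
    exact h2.sub_const p
  have hquarter : ∀ u : ℝ, HasDerivAt (fun v : ℝ => v/4) (1/4) u := by
    intro u
    simpa using (hasDerivAt_id u).div_const 4
  have hψmono : MonotoneOn (fun u => u/4 - φ u) (Set.Ici (0:ℝ)) := by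
    apply monotoneOn_of_deriv_nonneg (convex_Ici 0)
    · intro u hu
      exact ((hquarter u).sub (hdφ u hu)).continuousAt.continuousWithinAt
    · intro u hu
      rw [interior_Ici] at hu
      exact ((hquarter u).sub (hdφ u (le_of_lt hu))).differentiableAt.differentiableWithinAt
    · intro u hu
      rw [interior_Ici] at hu
      rw [HasDerivAt.deriv (f := fun u => u/4 - φ u) ((hquarter u).sub (hdφ u (le_of_lt hu)))]
      have hne : (0:ℝ) < h u := hpos u (le_of_lt hu)
      rw [sub_nonneg, div_le_iff₀ (by positivity)]
      have : 0 ≤ Real.exp u := (Real.exp_pos u).le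
      simp only [hh]
      nlinarith [sq_nonneg ((1-p) - p * Real.exp u), Real.exp_pos u]
  have hφle : ∀ u : ℝ, 0 ≤ u → φ u ≤ u / 4 := by
    intro u hu
    have h0 : (fun u => u/4 - φ u) 0 = 0 := by
      simp [hφ, hh]
    have := hψmono (Set.mem_Ici.2 le_rfl) (Set.mem_Ici.2 hu) hu
    rw [h0] at this
    linarith
  -- G u := log (h u) - p u - u^2/8 is antitone on [0,∞)
  have hdG : ∀ u : ℝ, 0 ≤ u →
      HasDerivAt (fun u => Real.log (h u) - p*u - u^2/8) (φ u - u/4) u := by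
    intro u hu
    have hne : h u ≠ 0 := (hpos u hu).ne'
    have h1 : HasDerivAt (fun u => Real.log (h u)) (p * Real.exp u / h u) u :=
      (hd u).log hne
    have h2 : HasDerivAt (fun u : ℝ => p*u) p u := by
      simpa using (hasDerivAt_id u).const_mul p
    have h3 : HasDerivAt (fun u : ℝ => u^2/8) (u/4) u := by
      have := ((hasDerivAt_pow 2 u).div_const 8)
      exact this.congr_deriv (by rw [show (2:ℕ) - 1 = 1 from rfl]; ring)
    have h4 := (h1.sub h2).sub h3
    have heq : φ u - u/4 = p * Real.exp u / h u - p - u/4 := by simp only [hφ]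
    rw [heq]
    exact h4
  have hGanti : AntitoneOn (fun u => Real.log (h u) - p*u - u^2/8) (Set.Ici (0:ℝ)) := by
    apply antitoneOn_of_deriv_nonpos (convex_Ici 0)
    · intro u hu
      exact (hdG u hu).continuousAt.continuousWithinAt
    · intro u hu
      rw [interior_Ici] at hu
      exact (hdG u (le_of_lt hu)).differentiableAt.differentiableWithinAt
    · intro u hu
      rw [interior_Ici] at hu
      rw [(hdG u (le_of_lt hu)).deriv]
      have := hφle u (le_of_lt hu)
      linarith
  have hG0 : (fun u => Real.log (h u) - p*u - u^2/8) 0 = 0 := by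
    simp [hh]
  have hGl := hGanti (Set.mem_Ici.2 le_rfl) (Set.mem_Ici.2 hl) hl
  rw [hG0] at hGl
  -- conclude
  have hlog : Real.log (h l) ≤ p*l + l^2/8 := by linarith
  have hl2 : h l ≤ Real.exp (p*l + l^2/8) := by
    rw [← Real.exp_log (hpos l hl)]
    exact Real.exp_le_exp.2 hlog
  calc Real.exp (-(l*p)) * (1 - p + p * Real.exp l)
      ≤ Real.exp (-(l*p)) * Real.exp (p*l + l^2/8) := by
        apply mul_le_mul_of_nonneg_left _ (Real.exp_pos _).le
        simpa [hh] using hl2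
    _ = Real.exp (l^2/8) := by rw [← Real.exp_add]; ring_nf

lemma hoeffding_core (p : ℝ) (hp0 : 0 ≤ p) (hp1 : p ≤ 1) (l : ℝ) :
    Real.exp (-(l*p)) * (1 - p + p * Real.exp l) ≤ Real.exp (l^2/8) := by
  rcases le_or_gt 0 l with hl | hl
  · exact hoeffding_core_nonneg p hp0 hp1 l hl
  · have key := hoeffding_core_nonneg (1-p) (by linarith) (by linarith) (-l) (by linarith)
    have hrw : Real.exp (-(-l*(1-p))) * (1 - (1-p) + (1-p) * Real.exp (-l))
        = Real.exp (-(l*p)) * (1 - p + p * Real.exp l) := by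
      have e1 : Real.exp (-(-l*(1-p))) * ((1-p) * Real.exp (-l))
          = (1-p) * Real.exp (-(l*p)) := by
        rw [mul_comm (Real.exp _), mul_assoc, ← Real.exp_add]; ring_nf
      have e2 : Real.exp (-(-l*(1-p))) * (1 - (1-p))
          = p * (Real.exp (-(l*p)) * Real.exp l) := by
        rw [← Real.exp_add, mul_comm]; ring_nf
      calc Real.exp (-(-l*(1-p))) * (1 - (1-p) + (1-p) * Real.exp (-l))
          = Real.exp (-(-l*(1-p))) * (1 - (1-p)) + Real.exp (-(-l*(1-p))) * ((1-p) * Real.exp (-l)) := by ring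
        _ = p * (Real.exp (-(l*p)) * Real.exp l) + (1-p) * Real.exp (-(l*p)) := by rw [e1, e2]
        _ = Real.exp (-(l*p)) * (1 - p + p * Real.exp l) := by ring
    rw [hrw] at key
    simpa [neg_sq] using key

lemma integrable_of_ae_bound {Ω : Type*} [MeasurableSpace Ω] {P : Measure Ω}
    [IsProbabilityMeasure P] {X : Ω → ℝ} (hm : Measurable X) {C : ℝ}
    (hb : ∀ᵐ ω ∂P, |X ω| ≤ C) : Integrable X P :=
  Integrable.mono' (integrable_const C) hm.aestronglyMeasurable hb

/-- Hoeffding's lemma for `[0,1]`-valued random variables. -/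
lemma mgf_bound {Ω : Type*} [MeasurableSpace Ω] (P : Measure Ω) [IsProbabilityMeasure P]
    (X : Ω → ℝ) (hm : Measurable X) (hb : ∀ᵐ ω ∂P, X ω ∈ Set.Icc (0:ℝ) 1) (l : ℝ) :
    ∫ ω, Real.exp (l * (X ω - ∫ ω', X ω' ∂P)) ∂P ≤ Real.exp (l^2/8) := by
  set p := ∫ ω', X ω' ∂P with hp
  have hXint : Integrable X P :=
    integrable_of_ae_bound hm (hb.mono fun ω h => abs_le.2 ⟨by linarith [h.1], h.2⟩)
  have hp0 : 0 ≤ p := integral_nonneg_of_ae (hb.mono fun ω h => h.1)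
  have hp1 : p ≤ 1 := by
    have := integral_mono_ae hXint (integrable_const 1) (hb.mono fun ω h => h.2)
    simpa using this
  have hmexp : Measurable fun ω => Real.exp (l * X ω) :=
    (Real.measurable_exp.comp (hm.const_mul l))
  have hexpint : Integrable (fun ω => Real.exp (l * X ω)) P := by
    apply integrable_of_ae_bound hmexp (C := Real.exp |l|)
    filter_upwards [hb] with ω hω
    rw [abs_of_pos (Real.exp_pos _)]
    apply Real.exp_le_exp.2
    rcases le_or_gt 0 l with h | h
    · calc l * X ω ≤ l * 1 := by nlinarith [hω.2]
        _ ≤ |l| := by rw [mul_one]; exact le_abs_self l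
    · calc l * X ω ≤ l * 0 := by nlinarith [hω.1]
        _ ≤ |l| := by simp [abs_nonneg]
  have key : ∫ ω, Real.exp (l * X ω) ∂P ≤ 1 - p + p * Real.exp l := by
    have chord : ∀ᵐ ω ∂P, Real.exp (l * X ω) ≤ 1 - X ω + X ω * Real.exp l := by
      filter_upwards [hb] with ω hω
      have := convexOn_exp.2 (Set.mem_univ (0:ℝ)) (Set.mem_univ l)
        (by linarith [hω.2] : (0:ℝ) ≤ 1 - X ω) hω.1 (by ring)
      simpa [smul_eq_mul, mul_comm] using this
    have hrint : Integrable (fun ω => 1 - X ω + X ω * Real.exp l) P := by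
      exact ((integrable_const 1).sub hXint).add (hXint.mul_const _)
    calc ∫ ω, Real.exp (l * X ω) ∂P ≤ ∫ ω, (1 - X ω + X ω * Real.exp l) ∂P :=
          integral_mono_ae hexpint hrint chord
      _ = 1 - p + p * Real.exp l := by
          rw [show (fun ω => 1 - X ω + X ω * Real.exp l)
              = (fun ω => 1 + X ω * (Real.exp l - 1)) from funext fun ω => by ring]
          rw [integral_add (integrable_const 1) (hXint.mul_const _), integral_mul_const]
          simp [hp]; ring
  have hfactor : ∫ ω, Real.exp (l * (X ω - p)) ∂P
      = Real.exp (-(l*p)) * ∫ ω, Real.exp (l * X ω) ∂P := by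
    rw [← integral_const_mul]
    congr 1; funext ω
    rw [← Real.exp_add]; ring_nf
  rw [hfactor]
  calc Real.exp (-(l*p)) * ∫ ω, Real.exp (l * X ω) ∂P
      ≤ Real.exp (-(l*p)) * (1 - p + p * Real.exp l) :=
        mul_le_mul_of_nonneg_left key (Real.exp_pos _).le
    _ ≤ Real.exp (l^2/8) := hoeffding_core p hp0 hp1 l




lemma integrable_of_ae_bound2 {Ω : Type*} [MeasurableSpace Ω] {P : Measure Ω}
    [IsProbabilityMeasure P] {X : Ω → ℝ} (hm : Measurable X) {C : ℝ}
    (hb : ∀ᵐ ω ∂P, |X ω| ≤ C) : Integrable X P :=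
  Integrable.mono' (integrable_const C) hm.aestronglyMeasurable hb

/-- Sum of centered values. -/
noncomputable def Zf (μ0 : ℝ) (x : ℕ → ℝ) (n : ℕ) : ℝ := ∑ i ∈ Finset.Icc 1 n, (x i - μ0)

/-- "No crossing of the line `a + ε n` up to time `m`". -/
def ncf (μ0 a ε : ℝ) (x : ℕ → ℝ) (m : ℕ) : Prop :=
  ∀ n ∈ Finset.Icc 1 m, Zf μ0 x n < a + ε*n

open Classical in
/-- The stopped exponential supermartingale. -/
noncomputable def Uf (μ0 a ε lam : ℝ) (x : ℕ → ℝ) (m : ℕ) : ℝ :=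
  ∏ i ∈ Finset.Icc 1 m,
    if ncf μ0 a ε x (i-1) then Real.exp (lam*(x i - μ0) - lam^2/8) else 1

variable {μ0 a ε lam : ℝ}

lemma Zf_measurable (n : ℕ) : Measurable (fun x : ℕ → ℝ => Zf μ0 x n) := by
  apply Finset.measurable_sum
  exact fun i _ => (measurable_pi_apply i).sub measurable_const

lemma ncf_measurableSet (m : ℕ) : MeasurableSet {x : ℕ → ℝ | ncf μ0 a ε x m} := by
  have : {x : ℕ → ℝ | ncf μ0 a ε x m}
      = ⋂ n ∈ Finset.Icc 1 m, {x : ℕ → ℝ | Zf μ0 x n < a + ε*n} := by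
    ext x; simp [ncf]
  rw [this]
  exact MeasurableSet.biInter (Set.to_countable _)
    (fun n _ => measurableSet_lt (Zf_measurable n) measurable_const)

lemma Uf_measurable (m : ℕ) : Measurable (fun x : ℕ → ℝ => Uf μ0 a ε lam x m) := by
  apply Finset.measurable_prod
  intro i _
  exact Measurable.ite (ncf_measurableSet (i-1))
    (Real.measurable_exp.comp
      (by fun_prop))
    measurable_const

lemma Uf_nonneg (x : ℕ → ℝ) (m : ℕ) : 0 ≤ Uf μ0 a ε lam x m := by
  apply Finset.prod_nonneg
  intro i _
  split
  · exact (Real.exp_pos _).le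
  · exact zero_le_one

lemma Uf_le (hlam : 0 ≤ lam) (hμ0 : 0 ≤ μ0) (x : ℕ → ℝ) (m : ℕ)
    (hx : ∀ i ∈ Finset.Icc 1 m, x i ≤ 1) :
    Uf μ0 a ε lam x m ≤ Real.exp lam ^ m := by
  have : Uf μ0 a ε lam x m ≤ ∏ _i ∈ Finset.Icc 1 m, Real.exp lam := by
    apply Finset.prod_le_prod
    · intro i _
      split
      · exact (Real.exp_pos _).le
      · exact zero_le_one
    · intro i hi
      split
      · apply Real.exp_le_exp.2
        have := hx i hi
        nlinarith [sq_nonneg lam]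
      · exact Real.one_le_exp hlam
  simpa [Nat.card_Icc] using this

lemma Zf_congr {x y : ℕ → ℝ} {m n : ℕ} (h : ∀ i ∈ Finset.Icc 1 m, x i = y i)
    (hnm : n ≤ m) : Zf μ0 x n = Zf μ0 y n := by
  apply Finset.sum_congr rfl
  intro i hi
  rw [h i (Finset.mem_Icc.2 ⟨(Finset.mem_Icc.1 hi).1, le_trans (Finset.mem_Icc.1 hi).2 hnm⟩)]

lemma ncf_congr {x y : ℕ → ℝ} {m m' : ℕ} (h : ∀ i ∈ Finset.Icc 1 m, x i = y i)
    (hm' : m' ≤ m) : ncf μ0 a ε x m' ↔ ncf μ0 a ε y m' := by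
  unfold ncf
  constructor <;> intro hc n hn
  · rw [← Zf_congr h (le_trans (Finset.mem_Icc.1 hn).2 hm')]; exact hc n hn
  · rw [Zf_congr h (le_trans (Finset.mem_Icc.1 hn).2 hm')]; exact hc n hn

lemma Uf_congr {x y : ℕ → ℝ} {m : ℕ} (h : ∀ i ∈ Finset.Icc 1 m, x i = y i) :
    Uf μ0 a ε lam x m = Uf μ0 a ε lam y m := by
  apply Finset.prod_congr rfl
  intro i hi
  obtain ⟨hi1, hi2⟩ := Finset.mem_Icc.1 hi
  have hiff := ncf_congr (μ0 := μ0) (a := a) (ε := ε) h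
    (show i - 1 ≤ m from le_trans (Nat.sub_le i 1) hi2)
  rw [h i hi]
  by_cases hc : ncf μ0 a ε y (i-1)
  · rw [if_pos hc, if_pos (hiff.2 hc)]
  · rw [if_neg hc, if_neg (fun hcc => hc (hiff.1 hcc))]

open Classical in
lemma Uf_succ (x : ℕ → ℝ) (m : ℕ) :
    Uf μ0 a ε lam x (m+1) = Uf μ0 a ε lam x m *
      (if ncf μ0 a ε x m then Real.exp (lam*(x (m+1) - μ0) - lam^2/8) else 1) := by
  unfold Uf
  rw [Finset.prod_Icc_succ_top (Nat.one_le_iff_ne_zero.2 (Nat.succ_ne_zero m))]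
  simp

lemma Uf_zero (x : ℕ → ℝ) : Uf μ0 a ε lam x 0 = 1 := by
  simp [Uf]

lemma Ioc_zero_eq_Icc_one (k : ℕ) : Finset.Ioc 0 k = Finset.Icc 1 k := by
  ext i; simp [Finset.mem_Ioc, Finset.mem_Icc]; omega

/-- On the crossing event, the stopped supermartingale is at least `exp (8εa)`. -/
lemma Uf_cross (hε : 0 < ε) (x : ℕ → ℝ) (S : ℕ)
    (hcross : ∃ n ∈ Finset.Icc 1 S, a + ε*n ≤ Zf μ0 x n) :
    Real.exp (8*ε*a) ≤ Uf μ0 a ε (8*ε) x S := by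
  classical
  set T := (Finset.Icc 1 S).filter (fun n => a + ε*n ≤ Zf μ0 x n) with hT
  have hTne : T.Nonempty := by
    obtain ⟨n, hn, hc⟩ := hcross
    exact ⟨n, Finset.mem_filter.2 ⟨hn, hc⟩⟩
  set n₀ := T.min' hTne with hn₀
  have hn₀T : n₀ ∈ T := Finset.min'_mem T hTne
  obtain ⟨hn₀Icc, hn₀c⟩ := Finset.mem_filter.1 hn₀T
  obtain ⟨hn₀1, hn₀S⟩ := Finset.mem_Icc.1 hn₀Icc
  have hmin : ∀ n ∈ Finset.Icc 1 S, a + ε*n ≤ Zf μ0 x n → n₀ ≤ n := by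
    intro n hn hc
    exact Finset.min'_le T n (Finset.mem_filter.2 ⟨hn, hc⟩)
  set lam := 8*ε with hlam
  set f : ℕ → ℝ := fun i =>
    if ncf μ0 a ε x (i-1) then Real.exp (lam*(x i - μ0) - lam^2/8) else 1 with hf
  have hsplit : Uf μ0 a ε lam x S = (∏ i ∈ Finset.Ioc 0 n₀, f i) * ∏ i ∈ Finset.Ioc n₀ S, f i := by
    rw [Finset.prod_Ioc_consecutive f (Nat.zero_le n₀) hn₀S]
    unfold Uf
    rw [Ioc_zero_eq_Icc_one]
  have hsecond : ∏ i ∈ Finset.Ioc n₀ S, f i = 1 := by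
    apply Finset.prod_eq_one
    intro i hi
    obtain ⟨hi1, hi2⟩ := Finset.mem_Ioc.1 hi
    have : ¬ ncf μ0 a ε x (i-1) := by
      intro hnc
      have hn₀mem : n₀ ∈ Finset.Icc 1 (i-1) :=
        Finset.mem_Icc.2 ⟨hn₀1, Nat.le_sub_one_of_lt hi1⟩
      exact absurd (hnc n₀ hn₀mem) (not_lt.2 hn₀c)
    simp [hf, this]
  have hfirst : ∀ i ∈ Finset.Ioc 0 n₀, f i = Real.exp (lam*(x i - μ0) - lam^2/8) := by
    intro i hi
    obtain ⟨hi1, hi2⟩ := Finset.mem_Ioc.1 hi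
    have hnc : ncf μ0 a ε x (i-1) := by
      intro n hn
      obtain ⟨hn1, hn2⟩ := Finset.mem_Icc.1 hn
      by_contra hcon
      push_neg at hcon
      have hnS : n ∈ Finset.Icc 1 S := Finset.mem_Icc.2
        ⟨hn1, le_trans hn2 (le_trans (Nat.sub_le i 1) (le_trans hi2 hn₀S))⟩
      have hge := hmin n hnS hcon
      have hlt : n < n₀ := lt_of_le_of_lt hn2 (Nat.lt_of_lt_of_le (Nat.sub_lt hi1 one_pos) hi2)
      omega
    simp [hf, hnc]
  calc Real.exp (8*ε*a)
      ≤ Real.exp (lam * Zf μ0 x n₀ - n₀ * (lam^2/8)) := by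
        apply Real.exp_le_exp.2
        have hmul : lam * (a + ε*n₀) ≤ lam * Zf μ0 x n₀ :=
          mul_le_mul_of_nonneg_left hn₀c (by positivity)
        have hexp : lam * (a + ε*n₀) - n₀ * (lam^2/8) = 8*ε*a := by
          rw [hlam]; ring
        linarith
    _ = ∏ i ∈ Finset.Ioc 0 n₀, f i := by
        rw [Finset.prod_congr rfl hfirst, ← Real.exp_sum]
        congr 1
        rw [Ioc_zero_eq_Icc_one]
        calc lam * Zf μ0 x n₀ - n₀ * (lam^2/8)
            = (∑ i ∈ Finset.Icc 1 n₀, lam*(x i - μ0))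
              - ((Finset.Icc 1 n₀).card : ℝ) * (lam^2/8) := by
              rw [← Finset.mul_sum, Nat.card_Icc]
              simp only [Nat.add_sub_cancel, Zf]
          _ = ∑ i ∈ Finset.Icc 1 n₀, (lam*(x i - μ0) - lam^2/8) := by
              rw [Finset.sum_sub_distrib, Finset.sum_const, nsmul_eq_mul]
    _ = Uf μ0 a ε lam x S := by rw [hsplit, hsecond, mul_one]

/-- Ville-type maximal inequality for crossing the line `a + ε n`. -/
lemma ville {Ω : Type*} [MeasurableSpace Ω] (P : Measure Ω) [IsProbabilityMeasure P]
    (S : ℕ) (X : ℕ → Ω → ℝ) (hX : ∀ i, Measurable (X i)) (μ0 : ℝ) (hμ00 : 0 ≤ μ0)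
    (hmgf : ∀ i ∈ Finset.Icc 1 S, ∀ l : ℝ,
       ∫ ω, Real.exp (l * (X i ω - μ0)) ∂P ≤ Real.exp (l^2/8))
    (hbd : ∀ i ∈ Finset.Icc 1 S, ∀ᵐ ω ∂P, X i ω ≤ 1)
    (hind : ∀ m, m < S → ∀ φ : (ℕ → ℝ) → ℝ, Measurable φ →
       (∀ x y : ℕ → ℝ, (∀ i ∈ Finset.Icc 1 m, x i = y i) → φ x = φ y) →
       IndepFun (fun ω => φ (fun i => X i ω)) (X (m+1)) P)
    (a ε : ℝ) (ha : 0 ≤ a) (hε : 0 < ε) :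
    P {ω | ∃ n ∈ Finset.Icc 1 S, a + ε*n ≤ ∑ i ∈ Finset.Icc 1 n, (X i ω - μ0)}
      ≤ ENNReal.ofReal (Real.exp (-(8*ε*a))) := by
  classical
  set lam := 8*ε with hlam
  have hlam0 : 0 ≤ lam := by positivity
  set vec : Ω → (ℕ → ℝ) := fun ω i => X i ω with hvec
  have hvecm : Measurable vec := measurable_pi_lambda _ (fun i => hX i)
  set U : ℕ → Ω → ℝ := fun m ω => Uf μ0 a ε lam (vec ω) m with hU
  have hUm : ∀ m, Measurable (U m) := fun m => (Uf_measurable m).comp hvecm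
  have hbdall : ∀ m, m ≤ S → ∀ᵐ ω ∂P, ∀ i ∈ Finset.Icc 1 m, X i ω ≤ 1 := by
    intro m hm
    apply ae_all_iff.2
    intro i
    by_cases hi : i ∈ Finset.Icc 1 m
    · exact (hbd i (Finset.mem_Icc.2 ⟨(Finset.mem_Icc.1 hi).1,
        le_trans (Finset.mem_Icc.1 hi).2 hm⟩)).mono (fun ω h _ => h)
    · exact Filter.Eventually.of_forall (fun ω hmem => absurd hmem hi)
  have hUint : ∀ m, m ≤ S → Integrable (U m) P := by
    intro m hm
    apply integrable_of_ae_bound (hUm m) (C := Real.exp lam ^ m)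
    filter_upwards [hbdall m hm] with ω hω
    rw [abs_of_nonneg (Uf_nonneg _ _)]
    exact Uf_le hlam0 hμ00 (vec ω) m hω
  have hstep : ∀ m, m < S → ∫ ω, U (m+1) ω ∂P ≤ ∫ ω, U m ω ∂P := by
    intro m hmS
    set φ : (ℕ → ℝ) → ℝ := fun x => Uf μ0 a ε lam x m * (if ncf μ0 a ε x m then 1 else 0)
      with hφ
    have hφm : Measurable φ :=
      (Uf_measurable m).mul
        (Measurable.ite (ncf_measurableSet m) measurable_const measurable_const)
    have hφcongr : ∀ x y : ℕ → ℝ, (∀ i ∈ Finset.Icc 1 m, x i = y i) → φ x = φ y := by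
      intro x y hxy
      simp only [hφ]
      rw [Uf_congr hxy]
      by_cases hc : ncf μ0 a ε y m
      · rw [if_pos hc, if_pos ((ncf_congr hxy le_rfl).2 hc)]
      · rw [if_neg hc, if_neg (fun hcc => hc ((ncf_congr hxy le_rfl).1 hcc))]
    set g : ℝ → ℝ := fun r => Real.exp (lam*(r - μ0) - lam^2/8) with hg
    have hgm : Measurable g :=
      Real.measurable_exp.comp (((measurable_id.sub measurable_const).const_mul lam).sub
        measurable_const)
    set ψ : Ω → ℝ := fun ω => φ (vec ω) with hψ
    have hψm : Measurable ψ := hφm.comp hvecm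
    have hψnn : ∀ ω, 0 ≤ ψ ω := by
      intro ω
      apply mul_nonneg (Uf_nonneg _ _)
      split <;> norm_num
    have hψbd : ∀ᵐ ω ∂P, |ψ ω| ≤ Real.exp lam ^ m := by
      filter_upwards [hbdall m (le_of_lt hmS)] with ω hω
      rw [abs_of_nonneg (hψnn ω)]
      calc ψ ω ≤ Uf μ0 a ε lam (vec ω) m * 1 := by
            apply mul_le_mul_of_nonneg_left _ (Uf_nonneg _ _)
            split <;> norm_num
        _ ≤ Real.exp lam ^ m := by rw [mul_one]; exact Uf_le hlam0 hμ00 _ m hω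
    have hψint : Integrable ψ P := integrable_of_ae_bound hψm hψbd
    have hgXm : Measurable (fun ω => g (X (m+1) ω)) := hgm.comp (hX (m+1))
    have hm1S : m + 1 ∈ Finset.Icc 1 S :=
      Finset.mem_Icc.2 ⟨Nat.succ_le_succ (Nat.zero_le m), Nat.succ_le_of_lt hmS⟩
    have hgXbd : ∀ᵐ ω ∂P, |g (X (m+1) ω)| ≤ Real.exp lam := by
      filter_upwards [hbd (m+1) hm1S] with ω hω
      rw [hg, abs_of_pos (Real.exp_pos _)]
      apply Real.exp_le_exp.2
      nlinarith [sq_nonneg lam]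
    have hgXint : Integrable (fun ω => g (X (m+1) ω)) P := integrable_of_ae_bound hgXm hgXbd
    have hindepψ : IndepFun ψ (fun ω => g (X (m+1) ω)) P := by
      have h1 := hind m hmS φ hφm hφcongr
      have h2 := h1.comp measurable_id hgm
      exact h2
    have hψgint : Integrable (fun ω => ψ ω * g (X (m+1) ω)) P := by
      apply integrable_of_ae_bound (hψm.mul hgXm) (C := Real.exp lam ^ m * Real.exp lam)
      filter_upwards [hψbd, hgXbd] with ω h1 h2
      rw [Pi.mul_apply, abs_mul]
      exact mul_le_mul h1 h2 (abs_nonneg _) (by positivity)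
    have hmul : ∫ ω, ψ ω * g (X (m+1) ω) ∂P
        = (∫ ω, ψ ω ∂P) * ∫ ω, g (X (m+1) ω) ∂P := by
      have := hindepψ.integral_mul_eq_mul_integral hψint.aestronglyMeasurable hgXint.aestronglyMeasurable
      simpa [Pi.mul_apply] using this
    have hgX1 : ∫ ω, g (X (m+1) ω) ∂P ≤ 1 := by
      have heq : (fun ω => g (X (m+1) ω))
          = fun ω => Real.exp (lam * (X (m+1) ω - μ0)) * Real.exp (-(lam^2/8)) := by
        funext ω; rw [hg, ← Real.exp_add]; ring_nf
      rw [heq, integral_mul_const]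
      calc (∫ ω, Real.exp (lam*(X (m+1) ω - μ0)) ∂P) * Real.exp (-(lam^2/8))
          ≤ Real.exp (lam^2/8) * Real.exp (-(lam^2/8)) :=
            mul_le_mul_of_nonneg_right (hmgf (m+1) hm1S lam) (Real.exp_pos _).le
        _ = 1 := by rw [← Real.exp_add]; simp
    set χ : Ω → ℝ := fun ω => U m ω * (if ncf μ0 a ε (vec ω) m then 0 else 1) with hχ
    have hχm : Measurable χ := by
      apply (hUm m).mul
      exact Measurable.ite (hvecm (ncf_measurableSet m)) measurable_const measurable_const
    have hχnn : ∀ ω, 0 ≤ χ ω := by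
      intro ω
      apply mul_nonneg (Uf_nonneg _ _)
      split <;> norm_num
    have hχint : Integrable χ P := by
      apply integrable_of_ae_bound hχm (C := Real.exp lam ^ m)
      filter_upwards [hbdall m (le_of_lt hmS)] with ω hω
      rw [abs_of_nonneg (hχnn ω)]
      calc χ ω ≤ U m ω * 1 := by
            apply mul_le_mul_of_nonneg_left _ (Uf_nonneg _ _)
            split <;> norm_num
        _ ≤ Real.exp lam ^ m := by rw [mul_one]; exact Uf_le hlam0 hμ00 _ m hω
    have hdecomp : ∀ ω, U (m+1) ω = χ ω + ψ ω * g (X (m+1) ω) := by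
      intro ω
      simp only [hU]
      rw [Uf_succ]
      by_cases hc : ncf μ0 a ε (vec ω) m
      · rw [if_pos hc]
        simp only [hχ, hψ, hφ, hU, if_pos hc, hg, hvec, if_pos (show ncf μ0 a ε (fun i => X i ω) m from hc)]
        ring
      · rw [if_neg hc]
        simp only [hχ, hψ, hφ, hU, if_neg hc, hg]
        ring
    have hsum : ∀ ω, χ ω + ψ ω = U m ω := by
      intro ω
      simp only [hχ, hψ, hφ, hU]
      by_cases hc : ncf μ0 a ε (vec ω) m
      · simp [hc]
      · simp [hc]
    calc ∫ ω, U (m+1) ω ∂P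
        = ∫ ω, (χ ω + ψ ω * g (X (m+1) ω)) ∂P :=
          integral_congr_ae (Filter.Eventually.of_forall hdecomp)
      _ = (∫ ω, χ ω ∂P) + ∫ ω, ψ ω * g (X (m+1) ω) ∂P := integral_add hχint hψgint
      _ = (∫ ω, χ ω ∂P) + (∫ ω, ψ ω ∂P) * ∫ ω, g (X (m+1) ω) ∂P := by rw [hmul]
      _ ≤ (∫ ω, χ ω ∂P) + (∫ ω, ψ ω ∂P) * 1 := by
          have hψ0 : 0 ≤ ∫ ω, ψ ω ∂P := integral_nonneg hψnn
          have := mul_le_mul_of_nonneg_left hgX1 hψ0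
          linarith
      _ = ∫ ω, (χ ω + ψ ω) ∂P := by
          rw [integral_add hχint hψint]; ring
      _ = ∫ ω, U m ω ∂P :=
          integral_congr_ae (Filter.Eventually.of_forall hsum)
  have hU0 : ∫ ω, U 0 ω ∂P = 1 := by
    simp only [hU, Uf_zero]
    simp
  have hUS : ∀ m, m ≤ S → ∫ ω, U m ω ∂P ≤ 1 := by
    intro m
    induction m with
    | zero => intro _; rw [hU0]
    | succ n ih =>
        intro h
        exact le_trans (hstep n (Nat.lt_of_succ_le h)) (ih (Nat.le_of_succ_le h))
  set A : Set Ω := {ω | ∃ n ∈ Finset.Icc 1 S, a + ε*n ≤ ∑ i ∈ Finset.Icc 1 n, (X i ω - μ0)}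
    with hA
  have hAeq : A = vec ⁻¹' {x : ℕ → ℝ | ∃ n ∈ Finset.Icc 1 S, a + ε*n ≤ Zf μ0 x n} := by
    ext ω; simp [hA, Zf, hvec]
  have hAm : MeasurableSet A := by
    rw [hAeq]
    apply hvecm
    have : {x : ℕ → ℝ | ∃ n ∈ Finset.Icc 1 S, a + ε*n ≤ Zf μ0 x n}
        = ⋃ n ∈ Finset.Icc 1 S, {x : ℕ → ℝ | a + ε*n ≤ Zf μ0 x n} := by
      ext x; simp
    rw [this]
    exact MeasurableSet.biUnion (Set.to_countable _)
      (fun n _ => measurableSet_le measurable_const (Zf_measurable n))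
  have hcrossU : ∀ ω ∈ A, Real.exp (8*ε*a) ≤ U S ω := by
    intro ω hω
    apply Uf_cross hε
    obtain ⟨n, hn, hc⟩ := hω
    exact ⟨n, hn, by simpa [Zf, hvec] using hc⟩
  have hkey : Real.exp (8*ε*a) * (P A).toReal ≤ 1 := by
    have h1 : ∫ ω in A, Real.exp (8*ε*a) ∂P ≤ ∫ ω in A, U S ω ∂P :=
      setIntegral_mono_on ((integrable_const _).integrableOn)
        ((hUint S le_rfl).integrableOn) hAm hcrossU
    have h2 : ∫ _ω in A, Real.exp (8*ε*a) ∂P = (P A).toReal * Real.exp (8*ε*a) := by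
      rw [setIntegral_const]; simp [smul_eq_mul, measureReal_def]
    have h3 : ∫ ω in A, U S ω ∂P ≤ ∫ ω, U S ω ∂P :=
      setIntegral_le_integral (hUint S le_rfl)
        (Filter.Eventually.of_forall (fun ω => Uf_nonneg _ _))
    have h4 := hUS S le_rfl
    calc Real.exp (8*ε*a) * (P A).toReal = ∫ _ω in A, Real.exp (8*ε*a) ∂P := by
          rw [h2]; ring
      _ ≤ 1 := le_trans h1 (le_trans h3 h4)
  have htoReal : (P A).toReal ≤ Real.exp (-(8*ε*a)) := by
    have hpos := Real.exp_pos (8*ε*a)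
    rw [Real.exp_neg, inv_eq_one_div, le_div_iff₀ hpos]
    linarith [hkey]
  calc P A = ENNReal.ofReal ((P A).toReal) := (ENNReal.ofReal_toReal (measure_ne_top P A)).symm
    _ ≤ ENNReal.ofReal (Real.exp (-(8*ε*a))) := ENNReal.ofReal_le_ofReal htoReal





lemma logPlus_nonneg (x : ℝ) : 0 ≤ logPlus x := by
  unfold logPlus
  split
  · exact Real.log_nonneg (by assumption)
  · exact le_rfl

lemma logPlus_mono {x y : ℝ} (h : x ≤ y) : logPlus x ≤ logPlus y := by
  unfold logPlus
  split
  · rw [if_pos (by linarith)]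
    exact Real.log_le_log (by linarith) h
  · split
    · exact Real.log_nonneg (by assumption)
    · exact le_rfl

lemma exp_neg_logPlus_le {x : ℝ} (hx : 0 < x) : Real.exp (-(logPlus x)) ≤ min 1 x⁻¹ := by
  unfold logPlus
  split
  · rename_i h
    rw [Real.exp_neg, Real.exp_log (by linarith)]
    exact le_min (by rw [inv_le_one_iff₀]; right; exact h) le_rfl
  · rename_i h
    push_neg at h
    rw [neg_zero, Real.exp_zero]
    exact le_min le_rfl (by rw [le_inv_comm₀ one_pos hx]; simpa using h.le)

/-- For the peeling argument: `∑_{j<n} min(1, 4^{j+1}/M) 2^{-j} ≤ 8/√M`. -/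
lemma sum_min_bound (M : ℕ) (hM : 1 ≤ M) (n : ℕ) :
    ∑ j ∈ Finset.range n, min 1 ((4:ℝ)^(j+1)/(M:ℝ)) * (1/2)^j ≤ 8 / Real.sqrt M := by
  have hM0 : (0:ℝ) < M := by exact_mod_cast hM
  have hMs : (0:ℝ) < Real.sqrt M := Real.sqrt_pos.2 hM0
  set L := Nat.log 2 M with hL
  set j₀ := L/2 with hj₀
  have h4j₀ : ((4:ℝ))^j₀ ≤ M := by
    have h1 : (4:ℕ)^j₀ ≤ M := by
      calc (4:ℕ)^j₀ = 2^(2*j₀) := by rw [pow_mul]; norm_num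
        _ ≤ 2^L := Nat.pow_le_pow_right (by norm_num) (by omega)
        _ ≤ M := Nat.pow_log_le_self 2 (by omega)
    exact_mod_cast h1
  have hM4 : (M:ℝ) < 4 * 4^j₀ := by
    have h1 : M < 2^(L+1) := Nat.lt_pow_succ_log_self (by norm_num) M
    have h2 : (2:ℕ)^(L+1) ≤ 2^(2*j₀+2) := Nat.pow_le_pow_right (by norm_num) (by omega)
    have h3 : (2:ℕ)^(2*j₀+2) = 4 * 4^j₀ := by
      rw [pow_add, pow_mul]; norm_num; ring
    have : M < 4 * 4^j₀ := by omega
    exact_mod_cast this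
  have h2j₀ : (2:ℝ)^j₀ ≤ Real.sqrt M := by
    rw [show ((2:ℝ))^j₀ = Real.sqrt ((4:ℝ)^j₀) from ?_]
    · exact Real.sqrt_le_sqrt h4j₀
    · rw [show ((4:ℝ))^j₀ = ((2:ℝ)^j₀)^2 by rw [← pow_mul, mul_comm, pow_mul]; norm_num]
      rw [Real.sqrt_sq (by positivity)]
  have hsqlt : Real.sqrt M < 2 * 2^j₀ := by
    rw [show (2:ℝ) * 2^j₀ = Real.sqrt ((2*2^j₀)^2) from (Real.sqrt_sq (by positivity)).symm]
    apply Real.sqrt_lt_sqrt (le_of_lt hM0)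
    calc (M:ℝ) < 4 * 4^j₀ := hM4
      _ = (2*2^j₀)^2 := by rw [mul_pow, ← pow_mul, mul_comm j₀ 2, pow_mul]; norm_num
  -- termwise bound
  have hterm : ∀ j ∈ Finset.range n, min 1 ((4:ℝ)^(j+1)/(M:ℝ)) * (1/2)^j
      ≤ if j < j₀ then (4:ℝ)*2^j/M else (1/2)^j := by
    intro j _
    split
    · have h1 : min 1 ((4:ℝ)^(j+1)/(M:ℝ)) * (1/2)^j ≤ (4:ℝ)^(j+1)/(M:ℝ) * (1/2)^j :=
        mul_le_mul_of_nonneg_right (min_le_right _ _) (by positivity)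
      have h3 : (4:ℝ)^(j+1)/(M:ℝ) * (1/2)^j = 4*2^j/M := by
        calc (4:ℝ)^(j+1)/(M:ℝ) * (1/2)^j = 4 * ((4:ℝ)^j * (1/2)^j) / M := by
              rw [pow_succ]; ring
          _ = 4*2^j/M := by rw [← mul_pow]; norm_num
      linarith
    · calc min 1 ((4:ℝ)^(j+1)/(M:ℝ)) * (1/2)^j ≤ 1 * (1/2)^j :=
          mul_le_mul_of_nonneg_right (min_le_left _ _) (by positivity)
        _ = (1/2)^j := one_mul _
  calc ∑ j ∈ Finset.range n, min 1 ((4:ℝ)^(j+1)/(M:ℝ)) * (1/2)^j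
      ≤ ∑ j ∈ Finset.range n, (if j < j₀ then (4:ℝ)*2^j/M else (1/2)^j) :=
        Finset.sum_le_sum hterm
    _ = (∑ j ∈ (Finset.range n).filter (· < j₀), (4:ℝ)*2^j/M)
        + ∑ j ∈ (Finset.range n).filter (¬ · < j₀), (1/2:ℝ)^j := by
        rw [← Finset.sum_filter_add_sum_filter_not (Finset.range n) (· < j₀)]
        congr 1
        · exact Finset.sum_congr rfl (fun j hj => if_pos (Finset.mem_filter.1 hj).2)
        · exact Finset.sum_congr rfl (fun j hj => if_neg (Finset.mem_filter.1 hj).2)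
    _ ≤ (∑ j ∈ Finset.range j₀, (4:ℝ)*2^j/M)
        + ∑ j ∈ Finset.Ico j₀ (j₀+n), (1/2:ℝ)^j := by
        apply add_le_add
        · apply Finset.sum_le_sum_of_subset_of_nonneg
          · intro j hj
            exact Finset.mem_range.2 (Finset.mem_filter.1 hj).2
          · intro j _ _; positivity
        · apply Finset.sum_le_sum_of_subset_of_nonneg
          · intro j hj
            obtain ⟨h1, h2⟩ := Finset.mem_filter.1 hj
            rw [Finset.mem_Ico]
            constructor
            · omega
            · have := Finset.mem_range.1 h1; omega
          · intro j _ _; positivity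
    _ ≤ 4/Real.sqrt M + 4/Real.sqrt M := by
        apply add_le_add
        · rw [show (∑ j ∈ Finset.range j₀, (4:ℝ)*2^j/M) = 4/M * ∑ j ∈ Finset.range j₀, 2^j from by
            rw [Finset.mul_sum]; exact Finset.sum_congr rfl (fun j _ => by ring)]
          rw [geom_sum_eq (by norm_num : (2:ℝ) ≠ 1) j₀]
          have hle : ((2:ℝ)^j₀ - 1)/(2-1) ≤ Real.sqrt M := by
            rw [show ((2:ℝ)-1) = 1 by norm_num, div_one]
            linarith [h2j₀]
          calc 4/(M:ℝ) * (((2:ℝ)^j₀-1)/(2-1)) ≤ 4/(M:ℝ) * Real.sqrt M := by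
                apply mul_le_mul_of_nonneg_left hle (by positivity)
            _ = 4/Real.sqrt M := by
                rw [div_mul_eq_mul_div, div_eq_div_iff (ne_of_gt hM0) (ne_of_gt hMs)]
                rw [mul_assoc, Real.mul_self_sqrt (le_of_lt hM0)]
        · have hpull : ∑ j ∈ Finset.Ico j₀ (j₀+n), (1/2:ℝ)^j
              = (1/2:ℝ)^j₀ * ∑ i ∈ Finset.range n, (1/2:ℝ)^i := by
            rw [Finset.sum_Ico_eq_sum_range]
            simp only [Nat.add_sub_cancel_left]
            rw [Finset.mul_sum]
            exact Finset.sum_congr rfl (fun i _ => by rw [pow_add])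
          rw [hpull]
          have hgeo : ∑ i ∈ Finset.range n, (1/2:ℝ)^i ≤ 2 := sum_geometric_two_le n
          calc (1/2:ℝ)^j₀ * ∑ i ∈ Finset.range n, (1/2:ℝ)^i ≤ (1/2:ℝ)^j₀ * 2 :=
                mul_le_mul_of_nonneg_left hgeo (by positivity)
            _ ≤ 4/Real.sqrt M := by
                have h1 : (1/2:ℝ)^j₀ = 1/2^j₀ := by rw [div_pow]; norm_num
                rw [h1]
                rw [div_mul_eq_mul_div, one_mul, div_le_div_iff₀ (by positivity) hMs]
                nlinarith [hsqlt, hMs]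
    _ = 8 / Real.sqrt M := by ring

/-- Extracting independence of the past from joint independence. -/
lemma indep_interface {Ω : Type*} [MeasurableSpace Ω] {P : Measure Ω}
    (S K : ℕ) (D : ℕ → ℕ → Ω → ℝ) (hDmeas : ∀ k n, Measurable (D k n))
    (hindep : iIndepFun
      (fun p : Fin K × Fin S => D ((p.1 : ℕ) + 1) ((p.2 : ℕ) + 1)) P)
    (k : ℕ) (hk1 : 1 ≤ k) (hkK : k ≤ K) (m : ℕ) (hmS : m < S)
    (φ : (ℕ → ℝ) → ℝ) (hφ : Measurable φ)
    (hdep : ∀ x y : ℕ → ℝ, (∀ i ∈ Finset.Icc 1 m, x i = y i) → φ x = φ y) :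
    IndepFun (fun ω => φ (fun i => D k i ω)) (D k (m+1)) P := by
  classical
  have hkK' : k - 1 < K := by omega
  set kk : Fin K := ⟨k-1, hkK'⟩ with hkk
  set mm : Fin S := ⟨m, hmS⟩ with hmm
  set A : Finset (Fin K × Fin S) :=
    Finset.univ.filter (fun p => p.1 = kk ∧ (p.2 : ℕ) < m) with hA
  set B : Finset (Fin K × Fin S) := {(kk, mm)} with hB
  have hdisj : Disjoint A B := by
    rw [Finset.disjoint_left]
    intro p hp hpB
    rw [hB, Finset.mem_singleton] at hpB
    rw [hA, Finset.mem_filter] at hp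
    have := hp.2.2
    rw [hpB] at this
    exact absurd this (lt_irrefl m)
  have hbase := hindep.indepFun_finset A B hdisj (fun p => hDmeas _ _)
  set Φ : ((p : A) → ℝ) → ℝ := fun v => φ (fun i =>
    if h : 1 ≤ i ∧ i ≤ m then
      v ⟨(kk, ⟨i-1, by omega⟩), by
        rw [hA, Finset.mem_filter]
        refine ⟨Finset.mem_univ _, rfl, ?_⟩
        show i - 1 < m
        omega⟩
    else 0) with hΦ
  have hΦm : Measurable Φ := by
    apply hφ.comp
    apply measurable_pi_lambda
    intro i
    by_cases h : 1 ≤ i ∧ i ≤ m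
    · simp only [dif_pos h]; exact measurable_pi_apply _
    · simp only [dif_neg h]; exact measurable_const
  set ev : ((p : B) → ℝ) → ℝ := fun w => w ⟨(kk, mm), Finset.mem_singleton_self _⟩ with hev
  have hevm : Measurable ev := measurable_pi_apply _
  have hcomp := hbase.comp hΦm hevm
  have hleft : (Φ ∘ (fun ω (p : A) => D (((p:Fin K × Fin S).1 : ℕ)+1) (((p:Fin K × Fin S).2 : ℕ)+1) ω))
      = fun ω => φ (fun i => D k i ω) := by
    funext ω
    simp only [Function.comp_apply, hΦ]
    apply hdep
    intro i hi
    obtain ⟨hi1, hi2⟩ := Finset.mem_Icc.1 hi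
    rw [dif_pos ⟨hi1, hi2⟩]
    show D (k - 1 + 1) (i - 1 + 1) ω = D k i ω
    congr 1 <;> omega
  have hright : (ev ∘ (fun ω (p : B) => D (((p:Fin K × Fin S).1 : ℕ)+1) (((p:Fin K × Fin S).2 : ℕ)+1) ω))
      = D k (m+1) := by
    funext ω
    simp only [Function.comp_apply, hev]
    show D (k - 1 + 1) (m + 1) ω = D k (m+1) ω
    congr 1
    omega
  rw [hleft, hright] at hcomp
  exact hcomp


end LcbAux


open MeasureTheory ProbabilityTheory Finset LcbAux

set_option maxHeartbeats 1000000


namespace LcbAux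

lemma sqrt_pi_div_conv (j : ℕ) :
    Real.sqrt (Real.pi/(2*4^j))/2 = Real.sqrt (Real.pi/8) * (1/2)^j := by
  have h2j : ((2:ℝ)^j)^2 = 4^j := by rw [← pow_mul, mul_comm, pow_mul]; norm_num
  have h2jpos : (0:ℝ) < (2:ℝ)^j := by positivity
  have key : Real.pi/(2*4^j) = (Real.pi/8) * (2/2^j)^2 := by
    rw [div_pow, h2j, div_mul_div_comm, div_eq_div_iff (by positivity) (by positivity)]
    ring
  rw [key, Real.sqrt_mul (by positivity), Real.sqrt_sq (by positivity)]
  rw [div_pow, one_pow]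
  field_simp

lemma arm_bound {Ω : Type*} [MeasurableSpace Ω] (P : Measure Ω) [IsProbabilityMeasure P]
    (S K : ℕ) (hK : 0 < K) (hSK : 4 * K ≤ S)
    (D : ℕ → ℕ → Ω → ℝ) (hDmeas : ∀ k n, Measurable (D k n))
    (hindep : iIndepFun
      (fun p : Fin K × Fin S => D ((p.1 : ℕ) + 1) ((p.2 : ℕ) + 1)) P)
    (hident : ∀ k ∈ Finset.Icc 1 K, ∀ n ∈ Finset.Icc 1 S, IdentDistrib (D k n) (D k 1) P P)
    (hbdd : ∀ k ∈ Finset.Icc 1 K, ∀ n ∈ Finset.Icc 1 S, ∀ᵐ ω ∂P, D k n ω ∈ Set.Icc (0 : ℝ) 1)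
    (μ : ℕ → ℝ) (hmean : ∀ k ∈ Finset.Icc 1 K, ∫ ω, D k 1 ω ∂P = μ k)
    (k : ℕ) (hk : k ∈ Finset.Icc 1 K)
    (Nf : Ω → ℕ) (hNm : Measurable Nf) (hNle : ∀ ω, Nf ω ≤ S) :
    ∫ ω, max (lcbL S K D k (Nf ω) ω - μ k) 0 ∂P
      ≤ Real.sqrt (Real.pi/8) * (8 / Real.sqrt ((S:ℝ)*K)) := by
  classical
  obtain ⟨hk1, hkK⟩ := Finset.mem_Icc.1 hk
  have hS4 : 4 ≤ S := le_trans (by omega) hSK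
  have hS1 : 1 ≤ S := by omega
  have h1S : 1 ∈ Finset.Icc 1 S := Finset.mem_Icc.2 ⟨le_rfl, hS1⟩
  have hM0 : (0:ℝ) < (S:ℝ)*K := by
    have h1 : (0:ℝ) < (S:ℝ) := by exact_mod_cast Nat.lt_of_lt_of_le (by norm_num) hS4
    have h2 : (0:ℝ) < (K:ℝ) := by exact_mod_cast hK
    positivity
  have hmeann : ∀ n ∈ Finset.Icc 1 S, ∫ ω, D k n ω ∂P = μ k := fun n hn =>
    ((hident k hk n hn).integral_eq).trans (hmean k hk)
  have hbd01 : ∀ n ∈ Finset.Icc 1 S, ∀ᵐ ω ∂P, D k n ω ∈ Set.Icc (0:ℝ) 1 := hbdd k hk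
  have hμ0 : 0 ≤ μ k := by
    rw [← hmean k hk]
    exact integral_nonneg_of_ae ((hbd01 1 h1S).mono fun ω h => h.1)
  have hmgf : ∀ n ∈ Finset.Icc 1 S, ∀ l : ℝ,
      ∫ ω, Real.exp (l * (D k n ω - μ k)) ∂P ≤ Real.exp (l^2/8) := by
    intro n hn l
    have := mgf_bound P (D k n) (hDmeas k n) (hbd01 n hn) l
    rwa [hmeann n hn] at this
  have hbd1 : ∀ n ∈ Finset.Icc 1 S, ∀ᵐ ω ∂P, D k n ω ≤ 1 :=
    fun n hn => (hbd01 n hn).mono (fun ω h => h.2)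
  have hind : ∀ m, m < S → ∀ φ : (ℕ → ℝ) → ℝ, Measurable φ →
      (∀ x y : ℕ → ℝ, (∀ i ∈ Finset.Icc 1 m, x i = y i) → φ x = φ y) →
      IndepFun (fun ω => φ (fun i => D k i ω)) (D k (m+1)) P :=
    fun m hm φ hφ hdep => indep_interface S K D hDmeas hindep k hk1 hkK m hm φ hφ hdep
  set f : Ω → ℝ := fun ω => max (lcbL S K D k (Nf ω) ω - μ k) 0 with hf
  have hlcbm : ∀ n, Measurable (fun ω => lcbL S K D k n ω) := by
    intro n
    unfold lcbL
    by_cases hn : n = 0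
    · simp only [if_pos hn]; exact measurable_const
    · simp only [if_neg hn]
      apply Measurable.max measurable_const
      apply Measurable.sub _ measurable_const
      unfold sampleMean
      exact (Finset.measurable_sum _ (fun i _ => hDmeas k i)).div_const _
  have hfm : Measurable f := by
    have hfeq : f = fun ω => ∑ n ∈ Finset.range (S+1),
        if Nf ω = n then max (lcbL S K D k n ω - μ k) 0 else 0 := by
      funext ω
      rw [Finset.sum_ite_eq (Finset.range (S+1)) (Nf ω)
        (fun n => max (lcbL S K D k n ω - μ k) 0)]
      rw [if_pos (Finset.mem_range.2 (Nat.lt_succ_of_le (hNle ω)))]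
    rw [hfeq]
    apply Finset.measurable_sum
    intro n _
    exact Measurable.ite (hNm (measurableSet_singleton n))
      (((hlcbm n).sub measurable_const).max measurable_const) measurable_const
  have hfnn : ∀ ω, 0 ≤ f ω := fun ω => le_max_right _ _
  have hDall : ∀ᵐ ω ∂P, ∀ n ∈ Finset.Icc 1 S, D k n ω ∈ Set.Icc (0:ℝ) 1 := by
    apply ae_all_iff.2
    intro n
    by_cases hn : n ∈ Finset.Icc 1 S
    · exact (hbd01 n hn).mono (fun ω h _ => h)
    · exact Filter.Eventually.of_forall (fun ω hmem => absurd hmem hn)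
  have hfle : ∀ᵐ ω ∂P, |f ω| ≤ 1 := by
    filter_upwards [hDall] with ω hω
    rw [abs_of_nonneg (hfnn ω)]
    have hlcb1 : lcbL S K D k (Nf ω) ω ≤ 1 := by
      unfold lcbL
      split
      · norm_num
      · rename_i hn0
        apply max_le (by norm_num)
        have hn₀R : (0:ℝ) < ((Nf ω : ℕ):ℝ) := by
          have : 1 ≤ Nf ω := Nat.one_le_iff_ne_zero.2 hn0
          exact_mod_cast this
        have hmean1 : sampleMean D k (Nf ω) ω ≤ 1 := by
          unfold sampleMean
          rw [div_le_one hn₀R]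
          calc ∑ j ∈ Finset.Icc 1 (Nf ω), D k j ω ≤ ∑ _j ∈ Finset.Icc 1 (Nf ω), (1:ℝ) := by
                apply Finset.sum_le_sum
                intro j hj
                exact (hω j (Finset.mem_Icc.2 ⟨(Finset.mem_Icc.1 hj).1,
                  le_trans (Finset.mem_Icc.1 hj).2 (hNle ω)⟩)).2
            _ = ((Nf ω : ℕ):ℝ) := by simp [Nat.card_Icc]
        have hsq := Real.sqrt_nonneg (logPlus ((S:ℝ)*K/(Nf ω)) / (Nf ω))
        linarith
    simp only [hf]
    apply max_le _ zero_le_one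
    linarith
  have hfint : Integrable f P := integrable_of_ae_bound hfm hfle
  have hlayer : ∫ ω, f ω ∂P = ∫ t in Set.Ioi (0:ℝ), ENNReal.toReal (P {ω | t < f ω}) :=
    hfint.integral_eq_integral_meas_lt (Filter.Eventually.of_forall hfnn)
  set Lj : ℕ → ℝ := fun j => logPlus ((S:ℝ)*K / 4^(j+1)) with hLj
  set aj : ℕ → ℝ → ℝ := fun j t => (Real.sqrt ((4:ℝ)^j * Lj j) + 4^j * t)/2 with haj
  set εj : ℕ → ℝ → ℝ := fun j t => (Real.sqrt (Lj j / 4^(j+1)) + t)/2 with hεj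
  set Aset : ℕ → ℝ → Set Ω := fun j t =>
    {ω | ∃ n ∈ Finset.Icc 1 S, aj j t + εj j t * n ≤ ∑ i ∈ Finset.Icc 1 n, (D k i ω - μ k)}
    with hAset
  have htail : ∀ t : ℝ, 0 < t → (P {ω | t < f ω}).toReal
      ≤ ∑ j ∈ Finset.range (S+1), min 1 ((4:ℝ)^(j+1)/((S:ℝ)*K)) * Real.exp (-(2*4^j) * t^2) := by
    intro t ht
    have hincl : {ω | t < f ω} ⊆ ⋃ j ∈ Finset.range (S+1), Aset j t := by
      intro ω hω
      simp only [Set.mem_setOf_eq, hf] at hω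
      have hn₀0 : Nf ω ≠ 0 := by
        intro h0
        rw [h0] at hω
        unfold lcbL at hω
        rw [if_pos rfl] at hω
        have : max (0 - μ k) 0 = 0 := max_eq_right (by linarith)
        rw [this] at hω
        linarith
      set n₀ := Nf ω with hn₀def
      have hn₀1 : 1 ≤ n₀ := Nat.one_le_iff_ne_zero.2 hn₀0
      have hn₀S : n₀ ≤ S := hNle ω
      have hn₀R : (0:ℝ) < (n₀:ℝ) := by exact_mod_cast hn₀1
      have hlt : t < lcbL S K D k n₀ ω - μ k := by
        rcases max_cases (lcbL S K D k n₀ ω - μ k) (0:ℝ) with ⟨heq, _⟩ | ⟨heq, _⟩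
        · rwa [heq] at hω
        · rw [heq] at hω; linarith
      have hlcb : μ k + t < max 0 (sampleMean D k n₀ ω
          - Real.sqrt (logPlus ((S:ℝ)*K/(n₀:ℝ)) / (n₀:ℝ))) := by
        have : lcbL S K D k n₀ ω = max 0 (sampleMean D k n₀ ω
            - Real.sqrt (logPlus ((S:ℝ)*K/(n₀:ℝ)) / (n₀:ℝ))) := by
          unfold lcbL; rw [if_neg hn₀0]
        rw [this] at hlt
        linarith
      have hXb : μ k + t < sampleMean D k n₀ ω
          - Real.sqrt (logPlus ((S:ℝ)*K/(n₀:ℝ)) / (n₀:ℝ)) := by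
        rcases lt_max_iff.1 hlcb with h | h
        · linarith
        · exact h
      have hsum : Real.sqrt ((n₀:ℝ) * logPlus ((S:ℝ)*K/(n₀:ℝ))) + n₀ * t
          < ∑ i ∈ Finset.Icc 1 n₀, (D k i ω - μ k) := by
        have hZ : ∑ i ∈ Finset.Icc 1 n₀, (D k i ω - μ k)
            = (n₀:ℝ) * sampleMean D k n₀ ω - n₀ * μ k := by
          rw [Finset.sum_sub_distrib, Finset.sum_const, Nat.card_Icc, nsmul_eq_mul]
          unfold sampleMean
          rw [mul_div_cancel₀ _ (ne_of_gt hn₀R), Nat.add_sub_cancel]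
        have hsqrt : (n₀:ℝ) * Real.sqrt (logPlus ((S:ℝ)*K/(n₀:ℝ)) / (n₀:ℝ))
            = Real.sqrt ((n₀:ℝ) * logPlus ((S:ℝ)*K/(n₀:ℝ))) := by
          rw [show (n₀:ℝ) * Real.sqrt (logPlus ((S:ℝ)*K/(n₀:ℝ)) / (n₀:ℝ))
              = Real.sqrt ((n₀:ℝ)^2 * (logPlus ((S:ℝ)*K/(n₀:ℝ)) / (n₀:ℝ))) from by
            rw [Real.sqrt_mul (by positivity), Real.sqrt_sq hn₀R.le]]
          congr 1
          field_simp
        have hmul := mul_lt_mul_of_pos_left hXb hn₀R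
        rw [hZ, ← hsqrt]
        nlinarith [hmul]
      set j := Nat.log 4 n₀ with hjdef
      have hjS : j ∈ Finset.range (S+1) :=
        Finset.mem_range.2 (Nat.lt_succ_of_le (le_trans (Nat.log_le_self 4 n₀) hn₀S))
      apply Set.mem_biUnion hjS
      refine ⟨n₀, Finset.mem_Icc.2 ⟨hn₀1, hn₀S⟩, ?_⟩
      have h4j : ((4:ℝ))^j ≤ (n₀:ℝ) := by
        exact_mod_cast Nat.pow_log_le_self 4 hn₀0
      have hj4 : (n₀:ℝ) < (4:ℝ)^(j+1) := by
        exact_mod_cast Nat.lt_pow_succ_log_self (by norm_num) n₀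
      have hLmono : Lj j ≤ logPlus ((S:ℝ)*K/(n₀:ℝ)) := by
        apply logPlus_mono
        rw [div_le_div_iff₀ (by positivity) hn₀R]
        nlinarith [hM0, hj4, hn₀R]
      have hLjnn : 0 ≤ Lj j := logPlus_nonneg _
      have hLnnn : 0 ≤ logPlus ((S:ℝ)*K/(n₀:ℝ)) := logPlus_nonneg _
      have hline : aj j t + εj j t * n₀
          ≤ Real.sqrt ((n₀:ℝ) * logPlus ((S:ℝ)*K/(n₀:ℝ))) + n₀ * t := by
        have h1 : Real.sqrt ((4:ℝ)^j * Lj j)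
            ≤ Real.sqrt ((n₀:ℝ) * logPlus ((S:ℝ)*K/(n₀:ℝ))) := by
          apply Real.sqrt_le_sqrt
          apply mul_le_mul h4j hLmono hLjnn hn₀R.le
        have h2 : (4:ℝ)^j * t ≤ n₀ * t := mul_le_mul_of_nonneg_right h4j ht.le
        have h3 : (n₀:ℝ) * Real.sqrt (Lj j / 4^(j+1))
            ≤ Real.sqrt ((n₀:ℝ) * logPlus ((S:ℝ)*K/(n₀:ℝ))) := by
          rw [show (n₀:ℝ) * Real.sqrt (Lj j / 4^(j+1))
              = Real.sqrt ((n₀:ℝ)^2 * (Lj j / 4^(j+1))) from by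
            rw [Real.sqrt_mul (by positivity), Real.sqrt_sq hn₀R.le]]
          apply Real.sqrt_le_sqrt
          have h4p : (0:ℝ) < (4:ℝ)^(j+1) := by positivity
          have hfrac : (n₀:ℝ)^2 / 4^(j+1) ≤ (n₀:ℝ) := by
            rw [div_le_iff₀ h4p]
            nlinarith
          calc (n₀:ℝ)^2 * (Lj j / 4^(j+1)) = ((n₀:ℝ)^2/4^(j+1)) * Lj j := by ring
            _ ≤ (n₀:ℝ) * logPlus ((S:ℝ)*K/(n₀:ℝ)) :=
              mul_le_mul hfrac hLmono hLjnn hn₀R.le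
        simp only [haj, hεj]
        nlinarith [h1, h2, h3]
      show aj j t + εj j t * n₀ ≤ ∑ i ∈ Finset.Icc 1 n₀, (D k i ω - μ k)
      linarith
    have hAj : ∀ j : ℕ, P (Aset j t)
        ≤ ENNReal.ofReal (min 1 ((4:ℝ)^(j+1)/((S:ℝ)*K)) * Real.exp (-(2*4^j) * t^2)) := by
      intro j
      have hLjnn : 0 ≤ Lj j := logPlus_nonneg _
      have haj0 : 0 ≤ aj j t := by
        simp only [haj]
        positivity
      have hεj0 : 0 < εj j t := by
        simp only [hεj]
        positivity
      have hville := ville P S (D k) (fun i => hDmeas k i) (μ k) hμ0 hmgf hbd1 hind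
        (aj j t) (εj j t) haj0 hεj0
      apply le_trans hville
      apply ENNReal.ofReal_le_ofReal
      have hprod : Lj j + 2*4^j*t^2 ≤ 8 * (εj j t) * (aj j t) := by
        have hs1 : Real.sqrt (Lj j/4^(j+1)) * Real.sqrt ((4:ℝ)^j * Lj j) = Lj j / 2 := by
          rw [← Real.sqrt_mul (by positivity)]
          rw [show Lj j/4^(j+1) * ((4:ℝ)^j * Lj j) = (Lj j/2)^2 from by
            rw [pow_succ]
            field_simp
            ring]
          exact Real.sqrt_sq (by positivity)
        have hs2 : (0:ℝ) ≤ Real.sqrt (Lj j/4^(j+1)) * ((4:ℝ)^j * t) := by positivity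
        have hs3 : (0:ℝ) ≤ t * Real.sqrt ((4:ℝ)^j * Lj j) := by positivity
        simp only [haj, hεj]
        nlinarith [hs1, hs2, hs3]
      calc Real.exp (-(8 * εj j t * aj j t))
          ≤ Real.exp (-(Lj j + 2*4^j*t^2)) := Real.exp_le_exp.2 (by linarith)
        _ = Real.exp (-(Lj j)) * Real.exp (-(2*4^j)*t^2) := by
            rw [← Real.exp_add]; ring_nf
        _ ≤ min 1 ((4:ℝ)^(j+1)/((S:ℝ)*K)) * Real.exp (-(2*4^j)*t^2) := by
            apply mul_le_mul_of_nonneg_right _ (Real.exp_pos _).le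
            have hexp := exp_neg_logPlus_le (show (0:ℝ) < (S:ℝ)*K/4^(j+1) by positivity)
            rwa [inv_div] at hexp
    have hsumfin : (∑ j ∈ Finset.range (S+1), P (Aset j t)) ≠ ⊤ :=
      (ENNReal.sum_lt_top.2 (fun j _ => measure_lt_top P _)).ne
    calc (P {ω | t < f ω}).toReal
        ≤ (∑ j ∈ Finset.range (S+1), P (Aset j t)).toReal := by
          apply ENNReal.toReal_mono hsumfin
          exact le_trans (measure_mono hincl) (measure_biUnion_finset_le _ _)
      _ = ∑ j ∈ Finset.range (S+1), (P (Aset j t)).toReal :=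
          ENNReal.toReal_sum (fun j _ => measure_ne_top P _)
      _ ≤ ∑ j ∈ Finset.range (S+1), min 1 ((4:ℝ)^(j+1)/((S:ℝ)*K)) * Real.exp (-(2*4^j)*t^2) := by
          apply Finset.sum_le_sum
          intro j _
          have h0 : (0:ℝ) ≤ min 1 ((4:ℝ)^(j+1)/((S:ℝ)*K)) * Real.exp (-(2*4^j)*t^2) :=
            mul_nonneg (le_min zero_le_one (by positivity)) (Real.exp_pos _).le
          calc (P (Aset j t)).toReal
              ≤ (ENNReal.ofReal (min 1 ((4:ℝ)^(j+1)/((S:ℝ)*K)) * Real.exp (-(2*4^j)*t^2))).toReal :=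
                ENNReal.toReal_mono ENNReal.ofReal_ne_top (hAj j)
            _ = _ := ENNReal.toReal_ofReal h0
  have hterm_int : ∀ j : ℕ, Integrable
      (fun t : ℝ => min 1 ((4:ℝ)^(j+1)/((S:ℝ)*K)) * Real.exp (-(2*4^j) * t^2))
      (volume.restrict (Set.Ioi 0)) := by
    intro j
    exact ((integrable_exp_neg_mul_sq (by positivity : (0:ℝ) < 2*4^j)).restrict).const_mul _
  have hFint : Integrable (fun t : ℝ => ∑ j ∈ Finset.range (S+1),
      min 1 ((4:ℝ)^(j+1)/((S:ℝ)*K)) * Real.exp (-(2*4^j) * t^2))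
      (volume.restrict (Set.Ioi 0)) :=
    integrable_finset_sum _ (fun j _ => hterm_int j)
  rw [hlayer]
  calc ∫ t in Set.Ioi (0:ℝ), (P {ω | t < f ω}).toReal
      ≤ ∫ t in Set.Ioi (0:ℝ), ∑ j ∈ Finset.range (S+1),
          min 1 ((4:ℝ)^(j+1)/((S:ℝ)*K)) * Real.exp (-(2*4^j)*t^2) := by
        apply integral_mono_of_nonneg
        · exact Filter.Eventually.of_forall (fun t => ENNReal.toReal_nonneg)
        · exact hFint
        · exact (ae_restrict_iff' measurableSet_Ioi).2
            (Filter.Eventually.of_forall (fun t ht => htail t ht))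
    _ = ∑ j ∈ Finset.range (S+1), min 1 ((4:ℝ)^(j+1)/((S:ℝ)*K)) * (Real.sqrt (Real.pi/(2*4^j))/2) := by
        rw [integral_finset_sum _ (fun j _ => hterm_int j)]
        apply Finset.sum_congr rfl
        intro j _
        rw [integral_const_mul]
        congr 1
        exact integral_gaussian_Ioi (2*4^j)
    _ = Real.sqrt (Real.pi/8) * ∑ j ∈ Finset.range (S+1), min 1 ((4:ℝ)^(j+1)/((S:ℝ)*K)) * (1/2)^j := by
        rw [Finset.mul_sum]
        apply Finset.sum_congr rfl
        intro j _
        rw [sqrt_pi_div_conv j]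
        ring
    _ ≤ Real.sqrt (Real.pi/8) * (8 / Real.sqrt ((S:ℝ)*K)) := by
        apply mul_le_mul_of_nonneg_left _ (Real.sqrt_nonneg _)
        have hSK1 : 1 ≤ S*K := by
          have := Nat.mul_le_mul hS1 hK
          omega
        have := sum_min_bound (S*K) hSK1 (S+1)
        rwa [Nat.cast_mul] at this

end LcbAux


/-- `Σ_k Σ_s E[(L_k(N_{k,s}) − μ_k)⁺] ≤ 6√(SK)` for arbitrary `{0,…,S}`-valued
random indices `N_{k,s}`. -/
theorem lcb_overestimate_expectation_bound
    {Ω : Type*} [MeasurableSpace Ω] (P : Measure Ω) [IsProbabilityMeasure P]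
    (S K : ℕ) (hK : 0 < K) (hSK : 4 * K ≤ S)
    (D : ℕ → ℕ → Ω → ℝ) (hDmeas : ∀ k n, Measurable (D k n))
    (hindep : iIndepFun
      (fun p : Fin K × Fin S => D ((p.1 : ℕ) + 1) ((p.2 : ℕ) + 1)) P)
    (hident : ∀ k ∈ Finset.Icc 1 K, ∀ n ∈ Finset.Icc 1 S, IdentDistrib (D k n) (D k 1) P P)
    (hbdd : ∀ k ∈ Finset.Icc 1 K, ∀ n ∈ Finset.Icc 1 S, ∀ᵐ ω ∂P, D k n ω ∈ Set.Icc (0 : ℝ) 1)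
    (μ : ℕ → ℝ) (hmean : ∀ k ∈ Finset.Icc 1 K, ∫ ω, D k 1 ω ∂P = μ k)
    (N : ℕ → ℕ → Ω → ℕ) (hNmeas : ∀ k s, Measurable (N k s))
    (hNle : ∀ k s ω, N k s ω ≤ S) :
    ∑ k ∈ Finset.Icc 1 K, ∑ s ∈ Finset.Icc 1 S,
      ∫ ω, max (lcbL S K D k (N k s ω) ω - μ k) 0 ∂P
      ≤ 6 * Real.sqrt ((S : ℝ) * K) := by

  have hM0 : (0:ℝ) < (S:ℝ)*K := by
    have h1 : (0:ℝ) < (K:ℝ) := by exact_mod_cast hK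
    have h2 : (0:ℝ) < (S:ℝ) := by
      have : 0 < S := by omega
      exact_mod_cast this
    positivity
  have harm : ∀ k ∈ Finset.Icc 1 K, ∀ s ∈ Finset.Icc 1 S,
      ∫ ω, max (lcbL S K D k (N k s ω) ω - μ k) 0 ∂P
        ≤ Real.sqrt (Real.pi/8) * (8 / Real.sqrt ((S:ℝ)*K)) :=
    fun k hk s _hs => LcbAux.arm_bound P S K hK hSK D hDmeas hindep hident hbdd μ hmean
      k hk (N k s) (hNmeas k s) (fun ω => hNle k s ω)
  calc ∑ k ∈ Finset.Icc 1 K, ∑ s ∈ Finset.Icc 1 S,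
        ∫ ω, max (lcbL S K D k (N k s ω) ω - μ k) 0 ∂P
      ≤ ∑ _k ∈ Finset.Icc 1 K, ∑ _s ∈ Finset.Icc 1 S,
          Real.sqrt (Real.pi/8) * (8 / Real.sqrt ((S:ℝ)*K)) :=
        Finset.sum_le_sum (fun k hk => Finset.sum_le_sum (fun s hs => harm k hk s hs))
    _ = (K:ℝ) * ((S:ℝ) * (Real.sqrt (Real.pi/8) * (8 / Real.sqrt ((S:ℝ)*K)))) := by
        rw [Finset.sum_const, Finset.sum_const, Nat.card_Icc, Nat.card_Icc,
          nsmul_eq_mul, nsmul_eq_mul, Nat.add_sub_cancel, Nat.add_sub_cancel]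
        try ring
    _ ≤ 6 * Real.sqrt ((S:ℝ)*K) := by
        have hpi : Real.sqrt (Real.pi/8) ≤ 3/4 := by
          calc Real.sqrt (Real.pi/8) ≤ Real.sqrt ((3/4)^2) := by
                apply Real.sqrt_le_sqrt
                nlinarith [Real.pi_le_four]
            _ = 3/4 := Real.sqrt_sq (by norm_num)
        have hdiv : ((S:ℝ)*K) / Real.sqrt ((S:ℝ)*K) = Real.sqrt ((S:ℝ)*K) :=
          Real.div_sqrt
        have hsqrt0 : 0 < Real.sqrt ((S:ℝ)*K) := Real.sqrt_pos.2 hM0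
        have key : (K:ℝ) * ((S:ℝ) * (Real.sqrt (Real.pi/8) * (8 / Real.sqrt ((S:ℝ)*K))))
            = 8 * Real.sqrt (Real.pi/8) * (((S:ℝ)*K) / Real.sqrt ((S:ℝ)*K)) := by
          ring
        rw [key, hdiv]
        nlinarith [Real.sqrt_nonneg ((S:ℝ)*K), hpi, hsqrt0]
end

section
/- Fix positive integers S and K with 4K ≤ S. For each arm k ∈ {1,…,K} let (D_{k,n})_{n=1}^S be random variables taking values in [0,1], i.i.d. with mean μ_k within each arm, the whole family being jointly independent. Let k(1),…,k(S) be arbitrary random variables on the same probability space with values in {1,…,K}, and set N_j(s) = #{u ∈ {1,…,s} : k(u) = j}. Then E[ Σ_{s=1}^S 1(N_{k(s)}(s−1) ≥ 1) · ( Û_{k(s)}(N_{k(s)}(s−1)) − μ_{k(s)} )⁺ ] ≤ 8√(SK), where x⁺ = max(x,0) and 1(·) denotes the indicator. -/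
set_option maxHeartbeats 1000000


open MeasureTheory ProbabilityTheory

/-- The upper confidence bound `Û_k(n) = X̄_k(n) + γ_n` where `γ_n = √(log₊(S/(Kn))/n)`. -/
noncomputable def ucbHat {Ω : Type*} (S K : ℕ) (D : ℕ → ℕ → Ω → ℝ) (k n : ℕ) (ω : Ω) : ℝ :=
  sampleMean D k n ω + Real.sqrt (logPlus ((S : ℝ) / (K * n)) / n)

/-- `N_j(s)(ω)`: the number of rounds `u ∈ {1,…,s}` in which arm `j` was selected. -/
def selCount {Ω : Type*} (sel : ℕ → Ω → ℕ) (j s : ℕ) (ω : Ω) : ℕ :=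
  ((Finset.Icc 1 s).filter (fun u => sel u ω = j)).card

/-! ### Auxiliary arithmetic lemmas -/

lemma bernoulli_rpow_le {p x : ℝ} (hp0 : 0 ≤ p) (hp1 : p ≤ 1) (hx1 : x ≤ 1) :
    (1 - x) ^ p ≤ 1 - p * x := by
  have h := Real.geom_mean_le_arith_mean2_weighted hp0 (by linarith : (0:ℝ) ≤ 1 - p)
    (by linarith : (0:ℝ) ≤ 1 - x) (zero_le_one) (by ring)
  calc (1 - x) ^ p = (1 - x) ^ p * (1:ℝ) ^ (1 - p) := by rw [Real.one_rpow, mul_one]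
    _ ≤ p * (1 - x) + (1 - p) * 1 := h
    _ = 1 - p * x := by ring

/-- `∑_{n=1}^N n^(p-1) ≤ N^p / p` for `0 < p ≤ 1`. -/
lemma sum_rpow_le (p : ℝ) (hp0 : 0 < p) (hp1 : p ≤ 1) (N : ℕ) :
    ∑ n ∈ Finset.Icc 1 N, ((n : ℝ)) ^ (p - 1) ≤ (N : ℝ) ^ p / p := by
  induction N with
  | zero => simp [Real.zero_rpow hp0.ne']
  | succ N ih =>
    rw [Finset.sum_Icc_succ_top (by omega : 1 ≤ N + 1)]
    have hN1 : (0:ℝ) < (N:ℝ) + 1 := by positivity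
    have hstep : ((N+1 : ℕ) : ℝ) ^ (p - 1) ≤ ((N+1 : ℕ) : ℝ) ^ p / p - (N : ℝ) ^ p / p := by
      push_cast
      have hx1 : 1 / ((N:ℝ) + 1) ≤ 1 := by
        rw [div_le_one hN1]; linarith
      have hb := bernoulli_rpow_le hp0.le hp1 hx1
      have hrw : (N : ℝ) = ((N:ℝ) + 1) * (1 - 1 / ((N:ℝ)+1)) := by field_simp; ring
      have h1 : (N : ℝ) ^ p ≤ ((N:ℝ)+1) ^ p * (1 - p / ((N:ℝ)+1)) := by
        calc (N : ℝ) ^ p = (((N:ℝ) + 1) * (1 - 1 / ((N:ℝ)+1))) ^ p := by rw [← hrw]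
          _ = ((N:ℝ)+1) ^ p * (1 - 1/((N:ℝ)+1)) ^ p := by
              rw [Real.mul_rpow hN1.le (by rw [sub_nonneg]; exact hx1)]
          _ ≤ ((N:ℝ)+1) ^ p * (1 - p * (1/((N:ℝ)+1))) := by
              apply mul_le_mul_of_nonneg_left hb (Real.rpow_nonneg hN1.le p)
          _ = ((N:ℝ)+1) ^ p * (1 - p / ((N:ℝ)+1)) := by ring_nf
      have h1' : (N:ℝ)^p * ((N:ℝ)+1) ≤ ((N:ℝ)+1)^p * ((N:ℝ)+1 - p) := by
        have h := mul_le_mul_of_nonneg_right h1 hN1.le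
        calc (N:ℝ)^p * ((N:ℝ)+1) ≤ (((N:ℝ)+1)^p * (1 - p/((N:ℝ)+1))) * ((N:ℝ)+1) := h
          _ = ((N:ℝ)+1)^p * ((N:ℝ)+1 - p) := by field_simp
      have h2 : ((N:ℝ)+1) ^ (p - 1) = ((N:ℝ)+1) ^ p / ((N:ℝ)+1) := by
        rw [Real.rpow_sub hN1, Real.rpow_one]
      rw [h2, div_sub_div_same, div_le_div_iff₀ hN1 hp0]
      nlinarith [h1']
    linarith

/-- tail sum: `∑_{n=M+1}^R n^(-5/4) ≤ 4 M^(-1/4)` for `M ≥ 1`. -/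
lemma sum_rpow_tail (M : ℕ) (hM : 1 ≤ M) (R : ℕ) :
    ∑ n ∈ Finset.Icc (M+1) R, ((n : ℝ)) ^ (-(5/4 : ℝ)) ≤ 4 * (M : ℝ) ^ (-(1/4 : ℝ)) := by
  have key : ∀ R : ℕ, ∑ n ∈ Finset.Icc (M+1) R, ((n : ℝ)) ^ (-(5/4 : ℝ))
      ≤ 4 * ((M : ℝ) ^ (-(1/4:ℝ)) - ((max M R : ℕ) : ℝ) ^ (-(1/4:ℝ))) := by
    intro R
    induction R with
    | zero =>
      rw [Finset.Icc_eq_empty (by omega)]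
      simp [Nat.max_eq_left (by omega : 0 ≤ M)]
    | succ R ih =>
      by_cases hRM : R + 1 ≤ M
      · rw [Finset.Icc_eq_empty (by omega)]
        rw [Nat.max_eq_left (by omega)]
        simp
      · push_neg at hRM
        have hRge : M ≤ R := by omega
        rw [Finset.sum_Icc_succ_top (by omega : M + 1 ≤ R + 1)]
        rw [Nat.max_eq_right (by omega : M ≤ R + 1)]
        rw [Nat.max_eq_right hRge] at ih
        have hstep : ((R+1 : ℕ) : ℝ) ^ (-(5/4:ℝ))
            ≤ 4 * ((R:ℝ) ^ (-(1/4:ℝ)) - ((R+1:ℕ):ℝ) ^ (-(1/4:ℝ))) := by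
          push_cast
          have hR0 : (0:ℝ) < (R:ℝ) := by exact_mod_cast (by omega : 0 < R)
          have hR1 : (0:ℝ) < (R:ℝ) + 1 := by linarith
          have hx1 : 1 / ((R:ℝ) + 1) ≤ 1 := by rw [div_le_one hR1]; linarith
          have hb := bernoulli_rpow_le (by norm_num : (0:ℝ) ≤ 1/4) (by norm_num) hx1
          have h1 : (R : ℝ) ^ ((1:ℝ)/4) ≤ ((R:ℝ)+1) ^ ((1:ℝ)/4) * (1 - (1/4) / ((R:ℝ)+1)) := by
            have hrw : (R : ℝ) = ((R:ℝ) + 1) * (1 - 1 / ((R:ℝ)+1)) := by field_simp; ring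
            calc (R : ℝ) ^ ((1:ℝ)/4) = (((R:ℝ)+1) * (1 - 1/((R:ℝ)+1))) ^ ((1:ℝ)/4) := by rw [← hrw]
              _ = ((R:ℝ)+1) ^ ((1:ℝ)/4) * (1 - 1/((R:ℝ)+1)) ^ ((1:ℝ)/4) := by
                  rw [Real.mul_rpow hR1.le (by rw [sub_nonneg]; exact hx1)]
              _ ≤ ((R:ℝ)+1) ^ ((1:ℝ)/4) * (1 - (1/4) * (1/((R:ℝ)+1))) := by
                  apply mul_le_mul_of_nonneg_left hb (Real.rpow_nonneg hR1.le _)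
              _ = ((R:ℝ)+1) ^ ((1:ℝ)/4) * (1 - (1/4)/((R:ℝ)+1)) := by ring_nf
          set a := (R : ℝ) ^ ((1:ℝ)/4) with ha_def
          set c := ((R:ℝ)+1) ^ ((1:ℝ)/4) with hc_def
          have hap : 0 < a := Real.rpow_pos_of_pos hR0 _
          have hcp : 0 < c := Real.rpow_pos_of_pos hR1 _
          have h1' : a * (4*((R:ℝ)+1)) ≤ c * (4*((R:ℝ)+1) - 1) := by
            have h := mul_le_mul_of_nonneg_right h1 (by positivity : (0:ℝ) ≤ 4*((R:ℝ)+1))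
            calc a * (4*((R:ℝ)+1)) ≤ (c * (1 - (1/4)/((R:ℝ)+1))) * (4*((R:ℝ)+1)) := h
              _ = c * (4*((R:ℝ)+1) - 1) := by field_simp
          have hc54 : ((R:ℝ)+1) ^ (-(5/4:ℝ)) = (((R:ℝ)+1) * c)⁻¹ := by
            rw [Real.rpow_neg hR1.le, show (5/4:ℝ) = 1 + 1/4 by norm_num,
              Real.rpow_add hR1, Real.rpow_one]
          rw [hc54, Real.rpow_neg hR1.le, Real.rpow_neg hR0.le, ← ha_def, ← hc_def,
            inv_sub_inv hap.ne' hcp.ne', inv_eq_one_div, ← mul_div_assoc,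
            div_le_div_iff₀ (by positivity) (by positivity)]
          nlinarith [mul_pos hap hcp, mul_pos hcp hcp, h1', hap.le, hcp.le,
            mul_le_mul_of_nonneg_right h1' hcp.le]
        linarith
  calc ∑ n ∈ Finset.Icc (M+1) R, ((n : ℝ)) ^ (-(5/4 : ℝ))
      ≤ 4 * ((M : ℝ) ^ (-(1/4:ℝ)) - ((max M R : ℕ) : ℝ) ^ (-(1/4:ℝ))) := key R
    _ ≤ 4 * (M : ℝ) ^ (-(1/4:ℝ)) := by
        have : (0:ℝ) ≤ ((max M R : ℕ) : ℝ) ^ (-(1/4:ℝ)) := Real.rpow_nonneg (by positivity) _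
        linarith

lemma logPlus_nonneg (x : ℝ) : 0 ≤ logPlus x := by
  unfold logPlus
  split
  · exact Real.log_nonneg (by assumption)
  · exact le_rfl

lemma logPlus_le_sqrt (x : ℝ) : logPlus x ≤ Real.sqrt x := by
  unfold logPlus
  split
  · rename_i h
    have hx : (0:ℝ) < x := by linarith
    have hq : (0:ℝ) < x ^ ((1:ℝ)/4) := Real.rpow_pos_of_pos hx _
    have hlog : Real.log x = 4 * Real.log (x ^ ((1:ℝ)/4)) := by
      rw [Real.log_rpow hx]; ring
    have h1 : Real.log (x ^ ((1:ℝ)/4)) ≤ x ^ ((1:ℝ)/4) - 1 :=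
      Real.log_le_sub_one_of_pos hq
    have h2 : 4 * (x ^ ((1:ℝ)/4) - 1) ≤ (x ^ ((1:ℝ)/4)) ^ 2 := by
      nlinarith [sq_nonneg (x ^ ((1:ℝ)/4) - 2)]
    have h3 : (x ^ ((1:ℝ)/4)) ^ 2 = Real.sqrt x := by
      rw [← Real.rpow_natCast (x ^ ((1:ℝ)/4)) 2, ← Real.rpow_mul hx.le,
        Real.sqrt_eq_rpow]
      norm_num
    linarith
  · exact Real.sqrt_nonneg x

/-- pointwise quartic tail bound: `(y-b)⁺ ≤ y⁴/(3b³)`. -/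
lemma quartic_tail_bound (y b : ℝ) (hb : 0 < b) : max (y - b) 0 ≤ y^4 / (3*b^3) := by
  rcases le_total y b with h | h
  · rw [max_eq_right (by linarith)]
    positivity
  · rw [max_eq_left (by linarith)]
    rw [le_div_iff₀ (by positivity)]
    nlinarith [sq_nonneg (y - b), sq_nonneg (y + b), sq_nonneg y, sq_nonneg b,
      mul_nonneg (mul_nonneg hb.le hb.le) hb.le, mul_nonneg (sq_nonneg (y-b)) (sq_nonneg (y+b)),
      mul_nonneg (mul_nonneg hb.le hb.le) (by linarith : (0:ℝ) ≤ y)]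

/-- tangent-line (concavity) bound for rpow: `x^q ≤ q·x·t^(q-1) + (1-q)·t^q`. -/
lemma tangent_rpow (q x t : ℝ) (hq0 : 0 ≤ q) (hq1 : q ≤ 1) (hx : 0 ≤ x) (ht : 0 < t) :
    x ^ q ≤ q * x * t ^ (q - 1) + (1 - q) * t ^ q := by
  have h := Real.geom_mean_le_arith_mean2_weighted hq0 (by linarith : (0:ℝ) ≤ 1 - q)
    hx ht.le (by ring)
  have htq : t ^ (q-1) * t ^ (1-q) = 1 := by
    rw [← Real.rpow_add ht]; norm_num
  have htpos : (0:ℝ) < t ^ (q-1) := Real.rpow_pos_of_pos ht _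
  have expand : x ^ q = (x ^ q * t ^ (1 - q)) * t ^ (q-1) := by
    rw [mul_assoc, mul_comm (t ^ (1-q)) (t ^ (q-1)), htq, mul_one]
  rw [expand]
  calc (x ^ q * t ^ (1 - q)) * t ^ (q-1) ≤ (q * x + (1-q) * t) * t ^ (q-1) := by
        exact mul_le_mul_of_nonneg_right h htpos.le
    _ = q * x * t ^ (q-1) + (1-q) * (t^(1:ℝ) * t ^ (q-1)) := by rw [Real.rpow_one]; ring
    _ = q * x * t ^ (q-1) + (1-q) * t ^ q := by
        rw [← Real.rpow_add ht, show (1:ℝ)+(q-1) = q by ring]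

/-- monotone fourth-root comparison -/
lemma rpow_quarter_le {x c : ℝ} (hx : 0 ≤ x) (hc : 0 ≤ c) (h : x ≤ c^4) :
    x ^ ((1:ℝ)/4) ≤ c := by
  have hcc : (c^4 : ℝ) ^ ((1:ℝ)/4) = c := by
    rw [← Real.rpow_natCast c 4, ← Real.rpow_mul hc]
    norm_num
  calc x ^ ((1:ℝ)/4) ≤ (c^4) ^ ((1:ℝ)/4) := Real.rpow_le_rpow hx h (by norm_num)
    _ = c := hcc

lemma max_shift_le (x g b : ℝ) (hg : 0 ≤ g) (hb : 0 ≤ b) :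
    max (x + g) 0 ≤ g + b + max (x - b) 0 := by
  apply max_le
  · have := le_max_left (x - b) 0
    linarith
  · have := le_max_right (x - b) 0
    linarith

/-! ### Independence and integration helpers -/

lemma iIndepFun_comp_of_injective {ι ι' Ω : Type*} [MeasurableSpace Ω] {P : Measure Ω}
    {f : ι → Ω → ℝ} (hf : iIndepFun f P)
    (g : ι' → ι) (hg : Function.Injective g) :
    iIndepFun (fun j => f (g j)) P := by
  classical
  rw [iIndepFun_iff_measure_inter_preimage_eq_mul] at hf ⊢
  intro s sets hsets
  set T := s.image g with hT
  set sets' : ι → Set ℝ := fun i =>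
    if h : ∃ j ∈ s, g j = i then sets h.choose else Set.univ with hsets'
  have hsets'_eq : ∀ j ∈ s, sets' (g j) = sets j := by
    intro j hj
    have hex : ∃ j' ∈ s, g j' = g j := ⟨j, hj, rfl⟩
    have : hex.choose = j := hg (hex.choose_spec.2)
    simp only [hsets', dif_pos hex, this]
  have hmeas' : ∀ i ∈ T, MeasurableSet (sets' i) := by
    intro i hi
    rw [Finset.mem_image] at hi
    obtain ⟨j, hj, rfl⟩ := hi
    rw [hsets'_eq j hj]
    exact hsets j hj
  have key := hf T hmeas'
  have hinj : ∀ x ∈ s, ∀ y ∈ s, g x = g y → x = y := fun x _ y _ h => hg h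
  rw [Finset.prod_image hinj] at key
  have hInter : (⋂ i ∈ T, f i ⁻¹' sets' i) = ⋂ j ∈ s, f (g j) ⁻¹' sets j := by
    rw [hT, Finset.set_biInter_finset_image]
    apply Set.iInter₂_congr
    intro j hj
    rw [hsets'_eq j hj]
  rw [hInter] at key
  rw [key]
  apply Finset.prod_congr rfl
  intro j hj
  rw [hsets'_eq j hj]

lemma integrable_of_ae_bound {Ω : Type*} [MeasurableSpace Ω] {P : Measure Ω}
    [IsFiniteMeasure P] {f : Ω → ℝ} (hm : AEStronglyMeasurable f P) {C : ℝ}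
    (h : ∀ᵐ ω ∂P, |f ω| ≤ C) : Integrable f P :=
  (memLp_top_of_bound hm C (by simpa [Real.norm_eq_abs] using h)).integrable le_top

lemma sum_fin_filter_eq {M : Type*} [AddCommMonoid M] (S n : ℕ) (hn : n ≤ S) (g : ℕ → M) :
    ∑ j ∈ Finset.univ.filter (fun j : Fin S => (j:ℕ)+1 ≤ n), g ((j:ℕ)+1)
      = ∑ m ∈ Finset.Icc 1 n, g m := by
  have himg : (Finset.univ.filter (fun j : Fin S => (j:ℕ)+1 ≤ n)).image
      (fun j : Fin S => (j:ℕ)+1) = Finset.Icc 1 n := by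
    ext m
    simp only [Finset.mem_image, Finset.mem_filter, Finset.mem_univ, true_and, Finset.mem_Icc]
    constructor
    · rintro ⟨j, hj, rfl⟩; omega
    · rintro ⟨h1, h2⟩
      exact ⟨⟨m - 1, by omega⟩, by simp; omega, by simp; omega⟩
  rw [← himg, Finset.sum_image (by intro x hx y hy hxy; exact Fin.ext (by simp only at hxy; omega))]

/-- Fourth moment bound for sums of independent, centered, a.e. `[-1,1]`-valued
random variables with variance at most `1/4`. -/
lemma moment4 {Ω : Type*} [MeasurableSpace Ω] (P : Measure Ω) [IsProbabilityMeasure P]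
    (S : ℕ) (W : ℕ → Ω → ℝ)
    (hmeas : ∀ j, Measurable (W j))
    (hindep : iIndepFun
      (fun j : Fin S => W ((j:ℕ)+1)) P)
    (hbdd : ∀ j, 1 ≤ j → j ≤ S → ∀ᵐ ω ∂P, |W j ω| ≤ 1)
    (hmean : ∀ j, 1 ≤ j → j ≤ S → ∫ ω, W j ω ∂P = 0)
    (hvar : ∀ j, 1 ≤ j → j ≤ S → ∫ ω, (W j ω)^2 ∂P ≤ 1/4)
    (n : ℕ) (hn : n ≤ S) :
    ∫ ω, (∑ j ∈ Finset.Icc 1 n, W j ω)^4 ∂P ≤ (n:ℝ)^2/4 := by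
  set V : ℕ → Ω → ℝ := fun m ω => ∑ j ∈ Finset.Icc 1 m, W j ω with hV
  have hVmeas : ∀ m, Measurable (V m) := by
    intro m
    apply Finset.measurable_sum
    intro j _
    exact hmeas j
  have hVbdd : ∀ m, m ≤ S → ∀ᵐ ω ∂P, |V m ω| ≤ m := by
    intro m hm
    have hall : ∀ᵐ ω ∂P, ∀ j ∈ (↑(Finset.Icc 1 m) : Set ℕ), |W j ω| ≤ 1 := by
      rw [MeasureTheory.ae_ball_iff (Finset.Icc 1 m).countable_toSet]
      intro j hj
      rw [Finset.mem_coe, Finset.mem_Icc] at hj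
      exact hbdd j hj.1 (hj.2.trans hm)
    filter_upwards [hall] with ω hω
    calc |V m ω| ≤ ∑ j ∈ Finset.Icc 1 m, |W j ω| := Finset.abs_sum_le_sum_abs _ _
      _ ≤ ∑ j ∈ Finset.Icc 1 m, (1:ℝ) :=
          Finset.sum_le_sum (fun i hi => hω i (Finset.mem_coe.mpr hi))
      _ = m := by simp [Nat.card_Icc]
  -- integrability of monomials
  have hI : ∀ m, m ≤ S → ∀ i, 1 ≤ i → i ≤ S → ∀ a b : ℕ,
      Integrable (fun ω => (V m ω)^a * (W i ω)^b) P := by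
    intro m hm i hi1 hi2 a b
    apply integrable_of_ae_bound
      ((((hVmeas m).pow_const a).mul ((hmeas i).pow_const b)).aestronglyMeasurable)
      (C := (m:ℝ)^a * 1)
    filter_upwards [hVbdd m hm, hbdd i hi1 hi2] with ω h1 h2
    simp only [Pi.mul_apply]
    rw [abs_mul, abs_pow, abs_pow]
    apply mul_le_mul (pow_le_pow_left₀ (abs_nonneg _) h1 a)
      (pow_le_one₀ (abs_nonneg _) h2) (by positivity) (by positivity)
  have hIV : ∀ m, m ≤ S → ∀ a : ℕ, Integrable (fun ω => (V m ω)^a) P := by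
    intro m hm a
    apply integrable_of_ae_bound (((hVmeas m).pow_const a).aestronglyMeasurable)
      (C := (m:ℝ)^a)
    filter_upwards [hVbdd m hm] with ω h1
    rw [abs_pow]
    exact pow_le_pow_left₀ (abs_nonneg _) h1 a
  have hIW : ∀ i, 1 ≤ i → i ≤ S → ∀ b : ℕ, Integrable (fun ω => (W i ω)^b) P := by
    intro i hi1 hi2 b
    apply integrable_of_ae_bound (((hmeas i).pow_const b).aestronglyMeasurable) (C := 1)
    filter_upwards [hbdd i hi1 hi2] with ω h2
    rw [abs_pow]
    exact pow_le_one₀ (abs_nonneg _) h2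
  -- mean zero of V
  have hVmean : ∀ m, m ≤ S → ∫ ω, V m ω ∂P = 0 := by
    intro m hm
    rw [hV]
    rw [integral_finset_sum _ (fun j hj => by
      have hj' := Finset.mem_Icc.mp hj
      have := hIW j hj'.1 (hj'.2.trans hm) 1
      simpa using this)]
    apply Finset.sum_eq_zero
    intro j hj
    have hj' := Finset.mem_Icc.mp hj
    exact hmean j hj'.1 (hj'.2.trans hm)
  -- the simultaneous induction
  suffices H : ∀ m, m ≤ S → ∫ ω, (V m ω)^2 ∂P ≤ (m:ℝ)/4 ∧ ∫ ω, (V m ω)^4 ∂P ≤ (m:ℝ)^2/4 by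
    exact (H n hn).2
  intro m
  induction m with
  | zero => intro _; simp [hV]
  | succ m ih =>
    intro hm1
    have hm : m ≤ S := by omega
    obtain ⟨ih2, ih4⟩ := ih hm
    set Z : Ω → ℝ := W (m+1) with hZ
    have hZ1 : (1:ℕ) ≤ m + 1 := by omega
    -- independence of V m and Z
    have hIndep : IndepFun (V m) Z P := by
      have hnotmem : (⟨m, by omega⟩ : Fin S) ∉
          Finset.univ.filter (fun j : Fin S => (j:ℕ)+1 ≤ m) := by simp
      have h := hindep.indepFun_finset_sum_of_notMem (fun j => hmeas _) hnotmem
      have hsum_eq : (∑ j ∈ Finset.univ.filter (fun j : Fin S => (j:ℕ)+1 ≤ m),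
          (fun j : Fin S => W ((j:ℕ)+1)) j) = V m := by
        funext ω
        rw [Finset.sum_apply]
        exact sum_fin_filter_eq S m hm (fun j => W j ω)
      rw [hsum_eq] at h
      exact h
    have hprod : ∀ a b : ℕ, ∫ ω, (V m ω)^a * (Z ω)^b ∂P
        = (∫ ω, (V m ω)^a ∂P) * ∫ ω, (Z ω)^b ∂P := by
      intro a b
      have hc : IndepFun (fun ω => (V m ω)^a) (fun ω => (Z ω)^b) P :=
        hIndep.comp (measurable_id.pow_const a) (measurable_id.pow_const b)
      exact hc.integral_fun_mul_eq_mul_integral (hIV m hm a).aestronglyMeasurable (hIW (m+1) hZ1 hm1 b).aestronglyMeasurable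
    -- moments of Z
    have hZmean : ∫ ω, Z ω ∂P = 0 := hmean (m+1) hZ1 hm1
    have hZ2 : ∫ ω, (Z ω)^2 ∂P ≤ 1/4 := hvar (m+1) hZ1 hm1
    have hZ2nn : 0 ≤ ∫ ω, (Z ω)^2 ∂P := integral_nonneg (fun ω => sq_nonneg _)
    have hZ4 : ∫ ω, (Z ω)^4 ∂P ≤ 1/4 := by
      have h42 : ∫ ω, (Z ω)^4 ∂P ≤ ∫ ω, (Z ω)^2 ∂P := by
        apply integral_mono_ae (hIW (m+1) hZ1 hm1 4) (hIW (m+1) hZ1 hm1 2)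
        filter_upwards [hbdd (m+1) hZ1 hm1] with ω hω
        calc (Z ω)^4 = ((Z ω)^2)^2 := by ring
          _ ≤ ((Z ω)^2)^1 := by
            apply pow_le_pow_of_le_one (sq_nonneg _) _ (by omega)
            calc (Z ω)^2 = |Z ω|^2 := (sq_abs _).symm
              _ ≤ 1 := by nlinarith [abs_nonneg (Z ω)]
          _ = (Z ω)^2 := pow_one _
      linarith
    have hV2nn : 0 ≤ ∫ ω, (V m ω)^2 ∂P := integral_nonneg (fun ω => sq_nonneg _)
    have hVmean0 : ∫ ω, V m ω ∂P = 0 := hVmean m hm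
    -- V (m+1) = V m + Z
    have hsplit : ∀ ω, V (m+1) ω = V m ω + Z ω := by
      intro ω
      rw [hV]
      exact Finset.sum_Icc_succ_top (by omega) _
    -- second moment expansion
    have key2 : ∫ ω, (V (m+1) ω)^2 ∂P
        = ∫ ω, (V m ω)^2 ∂P + 2*((∫ ω, (V m ω)^1 ∂P) * (∫ ω, (Z ω)^1 ∂P))
          + ∫ ω, (Z ω)^2 ∂P := by
      have e : (fun ω => (V (m+1) ω)^2)
          = fun ω => (V m ω)^2 + (2*((V m ω)^1 * (Z ω)^1) + (Z ω)^2) := by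
        funext ω; rw [hsplit ω]; ring
      have iV2 : Integrable (fun ω => (V m ω)^2) P := hIV m hm 2
      have i11 : Integrable (fun ω => 2 * ((V m ω)^1 * (Z ω)^1)) P :=
        (hI m hm (m+1) hZ1 hm1 1 1).const_mul 2
      have iZ2 : Integrable (fun ω => (Z ω)^2) P := hIW (m+1) hZ1 hm1 2
      have iA : Integrable (fun ω => 2 * ((V m ω)^1 * (Z ω)^1) + (Z ω)^2) P := i11.add iZ2
      rw [e, integral_add iV2 iA, integral_add i11 iZ2, integral_const_mul, hprod 1 1]
      ring
    -- fourth moment expansion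
    have key4 : ∫ ω, (V (m+1) ω)^4 ∂P
        = ∫ ω, (V m ω)^4 ∂P
          + 4*((∫ ω, (V m ω)^3 ∂P) * (∫ ω, (Z ω)^1 ∂P))
          + 6*((∫ ω, (V m ω)^2 ∂P) * (∫ ω, (Z ω)^2 ∂P))
          + 4*((∫ ω, (V m ω)^1 ∂P) * (∫ ω, (Z ω)^3 ∂P))
          + ∫ ω, (Z ω)^4 ∂P := by
      have e : (fun ω => (V (m+1) ω)^4)
          = fun ω => (V m ω)^4 + (4*((V m ω)^3 * (Z ω)^1)
            + (6*((V m ω)^2 * (Z ω)^2) + (4*((V m ω)^1 * (Z ω)^3) + (Z ω)^4))) := by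
        funext ω; rw [hsplit ω]; ring
      have iV4 : Integrable (fun ω => (V m ω)^4) P := hIV m hm 4
      have i31 : Integrable (fun ω => 4 * ((V m ω)^3 * (Z ω)^1)) P :=
        (hI m hm (m+1) hZ1 hm1 3 1).const_mul 4
      have i22 : Integrable (fun ω => 6 * ((V m ω)^2 * (Z ω)^2)) P :=
        (hI m hm (m+1) hZ1 hm1 2 2).const_mul 6
      have i13 : Integrable (fun ω => 4 * ((V m ω)^1 * (Z ω)^3)) P :=
        (hI m hm (m+1) hZ1 hm1 1 3).const_mul 4
      have iZ4 : Integrable (fun ω => (Z ω)^4) P := hIW (m+1) hZ1 hm1 4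
      have t3 : Integrable (fun ω => 4 * ((V m ω)^1 * (Z ω)^3) + (Z ω)^4) P := i13.add iZ4
      have t2 : Integrable (fun ω => 6 * ((V m ω)^2 * (Z ω)^2)
          + (4 * ((V m ω)^1 * (Z ω)^3) + (Z ω)^4)) P := i22.add t3
      have t1 : Integrable (fun ω => 4 * ((V m ω)^3 * (Z ω)^1)
          + (6 * ((V m ω)^2 * (Z ω)^2) + (4 * ((V m ω)^1 * (Z ω)^3) + (Z ω)^4))) P := i31.add t2
      rw [e, integral_add iV4 t1, integral_add i31 t2, integral_add i22 t3,
        integral_add i13 iZ4, integral_const_mul, integral_const_mul, integral_const_mul,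
        hprod 3 1, hprod 2 2, hprod 1 3]
      ring
    have hpow1V : ∫ ω, (V m ω)^1 ∂P = 0 := by simpa using hVmean0
    have hpow1Z : ∫ ω, (Z ω)^1 ∂P = 0 := by simpa using hZmean
    constructor
    · rw [key2, hpow1Z]
      push_cast
      linarith
    · rw [key4, hpow1Z, hpow1V]
      have h6 : (∫ ω, (V m ω)^2 ∂P) * (∫ ω, (Z ω)^2 ∂P) ≤ ((m:ℝ)/4) * (1/4) := by
        apply mul_le_mul ih2 hZ2 hZ2nn (by positivity)
      push_cast
      nlinarith [h6]


/-! ### selCount helpers and the deterministic injection -/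

lemma selCount_mono {Ω : Type*} (sel : ℕ → Ω → ℕ) (j : ℕ) {s t : ℕ} (h : s ≤ t) (ω : Ω) :
    selCount sel j s ω ≤ selCount sel j t ω :=
  Finset.card_le_card (Finset.filter_subset_filter _ (Finset.Icc_subset_Icc le_rfl h))

lemma selCount_le {Ω : Type*} (sel : ℕ → Ω → ℕ) (j s : ℕ) (ω : Ω) :
    selCount sel j s ω ≤ s :=
  le_trans (Finset.card_filter_le _ _) (by simp [Nat.card_Icc])

lemma selCount_succ {Ω : Type*} (sel : ℕ → Ω → ℕ) {j s : ℕ} (ω : Ω) (hs : 1 ≤ s)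
    (h : sel s ω = j) : selCount sel j s ω = selCount sel j (s-1) ω + 1 := by
  unfold selCount
  have hins : Finset.Icc 1 s = insert s (Finset.Icc 1 (s-1)) := by
    ext u; simp only [Finset.mem_Icc, Finset.mem_insert]; omega
  rw [hins, Finset.filter_insert, if_pos h, Finset.card_insert_of_notMem]
  intro hmem
  rw [Finset.mem_filter, Finset.mem_Icc] at hmem
  omega

lemma selCount_sum {Ω : Type*} (sel : ℕ → Ω → ℕ) (S K : ℕ) (ω : Ω)
    (hrange : ∀ s ∈ Finset.Icc 1 S, sel s ω ∈ Finset.Icc 1 K) :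
    ∑ k ∈ Finset.Icc 1 K, selCount sel k S ω = S := by
  have := Finset.card_eq_sum_card_fiberwise (f := fun u => sel u ω)
    (s := Finset.Icc 1 S) (t := Finset.Icc 1 K) hrange
  simp only [Nat.card_Icc, Nat.add_sub_cancel] at this
  unfold selCount
  omega

lemma sum_selected_le {Ω : Type*} (S K : ℕ) (sel : ℕ → Ω → ℕ) (ω : Ω)
    (hrange : ∀ s ∈ Finset.Icc 1 S, sel s ω ∈ Finset.Icc 1 K)
    (H : ℕ → ℕ → ℝ) (hH : ∀ k n, 0 ≤ H k n) :
    ∑ s ∈ Finset.Icc 1 S, (if 1 ≤ selCount sel (sel s ω) (s-1) ω then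
        H (sel s ω) (selCount sel (sel s ω) (s-1) ω) else 0)
      ≤ ∑ k ∈ Finset.Icc 1 K, ∑ n ∈ Finset.Icc 1 S,
          (if n ≤ selCount sel k S ω then H k n else 0) := by
  classical
  set A := (Finset.Icc 1 S).filter (fun s => 1 ≤ selCount sel (sel s ω) (s-1) ω) with hA
  set e : ℕ → ℕ × ℕ := fun s => (sel s ω, selCount sel (sel s ω) (s-1) ω) with he
  set G : ℕ × ℕ → ℝ := fun p => if p.2 ≤ selCount sel p.1 S ω then H p.1 p.2 else 0 with hG
  have hGnn : ∀ p, 0 ≤ G p := by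
    intro p; rw [hG]; dsimp only; split
    · exact hH _ _
    · exact le_rfl
  have step1 : ∑ s ∈ Finset.Icc 1 S, (if 1 ≤ selCount sel (sel s ω) (s-1) ω then
      H (sel s ω) (selCount sel (sel s ω) (s-1) ω) else 0)
      = ∑ s ∈ A, H (sel s ω) (selCount sel (sel s ω) (s-1) ω) :=
    (Finset.sum_filter _ _).symm
  have step2 : ∀ s ∈ A, H (sel s ω) (selCount sel (sel s ω) (s-1) ω) = G (e s) := by
    intro s hs
    rw [hA, Finset.mem_filter, Finset.mem_Icc] at hs
    rw [hG, he]
    dsimp only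
    rw [if_pos (selCount_mono sel _ (by omega : s - 1 ≤ S) ω)]
  have hinj : ∀ x ∈ A, ∀ y ∈ A, e x = e y → x = y := by
    have claim : ∀ x ∈ A, ∀ y ∈ A, x < y → e x ≠ e y := by
      intro x hx y hy hlt hxy
      rw [hA, Finset.mem_filter, Finset.mem_Icc] at hx hy
      rw [he, Prod.ext_iff] at hxy
      obtain ⟨h1, h2⟩ := hxy
      dsimp only at h1 h2
      have hx1 : selCount sel (sel x ω) x ω = selCount sel (sel x ω) (x-1) ω + 1 :=
        selCount_succ sel ω (by omega) rfl
      have hx2 : selCount sel (sel x ω) x ω ≤ selCount sel (sel x ω) (y-1) ω :=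
        selCount_mono sel _ (by omega) ω
      rw [h1] at hx1 hx2 h2
      omega
    intro x hx y hy hxy
    rcases lt_trichotomy x y with h | h | h
    · exact absurd hxy (claim x hx y hy h)
    · exact h
    · exact absurd hxy.symm (claim y hy x hx h)
  have himage : A.image e ⊆ (Finset.Icc 1 K) ×ˢ (Finset.Icc 1 S) := by
    intro p hp
    rw [Finset.mem_image] at hp
    obtain ⟨s, hs, rfl⟩ := hp
    rw [hA, Finset.mem_filter] at hs
    rw [Finset.mem_product, he]
    constructor
    · exact hrange s hs.1
    · have h2 : selCount sel (sel s ω) (s-1) ω ≤ s - 1 := selCount_le sel _ _ ω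
      have h3 : s ∈ Finset.Icc 1 S := hs.1
      rw [Finset.mem_Icc] at h3
      have h4 := hs.2
      simp only [Finset.mem_Icc]
      omega
  calc ∑ s ∈ Finset.Icc 1 S, (if 1 ≤ selCount sel (sel s ω) (s-1) ω then
        H (sel s ω) (selCount sel (sel s ω) (s-1) ω) else 0)
      = ∑ s ∈ A, H (sel s ω) (selCount sel (sel s ω) (s-1) ω) := step1
    _ = ∑ s ∈ A, G (e s) := Finset.sum_congr rfl step2
    _ = ∑ p ∈ A.image e, G p := (Finset.sum_image hinj).symm
    _ ≤ ∑ p ∈ (Finset.Icc 1 K) ×ˢ (Finset.Icc 1 S), G p :=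
        Finset.sum_le_sum_of_subset_of_nonneg himage (fun p _ _ => hGnn p)
    _ = ∑ k ∈ Finset.Icc 1 K, ∑ n ∈ Finset.Icc 1 S,
          (if n ≤ selCount sel k S ω then H k n else 0) := by
        rw [Finset.sum_product]

/-- `E[Σ_{s=1}^S 1(N_{k(s)}(s−1) ≥ 1)·(Û_{k(s)}(N_{k(s)}(s−1)) − μ_{k(s)})⁺] ≤ 8√(SK)`
for an arbitrary arm-selection process. -/
theorem ucbHat_selected_overestimate_bound
    {Ω : Type*} [MeasurableSpace Ω] (P : Measure Ω) [IsProbabilityMeasure P]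
    (S K : ℕ) (hK : 0 < K) (hSK : 4 * K ≤ S)
    (D : ℕ → ℕ → Ω → ℝ) (hDmeas : ∀ k n, Measurable (D k n))
    (hindep : iIndepFun
      (fun p : Fin K × Fin S => D ((p.1 : ℕ) + 1) ((p.2 : ℕ) + 1)) P)
    (hident : ∀ k ∈ Finset.Icc 1 K, ∀ n ∈ Finset.Icc 1 S, IdentDistrib (D k n) (D k 1) P P)
    (hbdd : ∀ k ∈ Finset.Icc 1 K, ∀ n ∈ Finset.Icc 1 S, ∀ᵐ ω ∂P, D k n ω ∈ Set.Icc (0 : ℝ) 1)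
    (μ : ℕ → ℝ) (hmean : ∀ k ∈ Finset.Icc 1 K, ∫ ω, D k 1 ω ∂P = μ k)
    (sel : ℕ → Ω → ℕ) (hselmeas : ∀ s, Measurable (sel s))
    (hselrange : ∀ s ∈ Finset.Icc 1 S, ∀ ω, sel s ω ∈ Finset.Icc 1 K) :
    ∫ ω, ∑ s ∈ Finset.Icc 1 S,
      (if 1 ≤ selCount sel (sel s ω) (s - 1) ω then
        max (ucbHat S K D (sel s ω) (selCount sel (sel s ω) (s - 1) ω) ω - μ (sel s ω)) 0
      else 0) ∂P
      ≤ 8 * Real.sqrt ((S : ℝ) * K) := by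
  classical
  have hS4 : 4 ≤ S := by omega
  have hKr : (0:ℝ) < K := by exact_mod_cast hK
  have hSr : (0:ℝ) < S := by exact_mod_cast (by omega : 0 < S)
  set M : ℕ := S / K with hMdef
  have hM4 : 4 ≤ M := (Nat.le_div_iff_mul_le hK).mpr (by omega)
  have hMS : M ≤ S := Nat.div_le_self _ _
  have hSKr : (0:ℝ) < (S:ℝ)/K := by positivity
  set c : ℝ := ((S:ℝ)/K) ^ ((1:ℝ)/4) with hc
  have hcpos : 0 < c := Real.rpow_pos_of_pos hSKr _
  have hgen : ∀ m : ℕ, ((S:ℝ)/K) ^ ((m:ℝ)/4) = c^m := by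
    intro m
    rw [hc, ← Real.rpow_natCast (((S:ℝ)/K) ^ ((1:ℝ)/4)) m, ← Real.rpow_mul hSKr.le]
    congr 1
    ring
  have hc4 : c^4 = (S:ℝ)/K := by
    have := hgen 4
    norm_num at this
    rw [← this]
  have hKc4 : (K:ℝ) * c^4 = S := by
    rw [hc4]
    field_simp
  -- quarter-power helper for naturals
  have hqu : ∀ n : ℕ, 1 ≤ n → ∀ m : ℕ, ((n:ℝ)) ^ ((m:ℝ)/4) = ((n:ℝ) ^ ((1:ℝ)/4))^m := by
    intro n hn m
    rw [← Real.rpow_natCast ((n:ℝ) ^ ((1:ℝ)/4)) m, ← Real.rpow_mul (by positivity)]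
    congr 1
    ring
  -- definitions
  set bf : ℕ → ℝ := fun n => (2*(n:ℝ))^(-(1/2:ℝ)) + c⁻¹ * (n:ℝ)^(-(1/4:ℝ)) with hbf
  have hbf_nonneg : ∀ n, 0 ≤ bf n := by
    intro n
    rw [hbf]
    have h1 : (0:ℝ) ≤ (2*(n:ℝ))^(-(1/2:ℝ)) := Real.rpow_nonneg (by positivity) _
    have h2 : (0:ℝ) ≤ (n:ℝ)^(-(1/4:ℝ)) := Real.rpow_nonneg (by positivity) _
    positivity
  set tl : ℕ → ℕ → Ω → ℝ := fun k n ω => max (sampleMean D k n ω - μ k - bf n) 0 with htl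
  have htl_nonneg : ∀ k n ω, 0 ≤ tl k n ω := fun k n ω => le_max_right _ _
  -- mean in [0,1]
  have hDint : ∀ k ∈ Finset.Icc 1 K, ∀ j ∈ Finset.Icc 1 S, Integrable (D k j) P := by
    intro k hk j hj
    apply integrable_of_ae_bound (hDmeas k j).aestronglyMeasurable (C := 1)
    filter_upwards [hbdd k hk j hj] with ω h
    rw [abs_le]
    exact ⟨by linarith [h.1], h.2⟩
  have h1S : (1:ℕ) ∈ Finset.Icc 1 S := by rw [Finset.mem_Icc]; omega
  have hμIcc : ∀ k ∈ Finset.Icc 1 K, μ k ∈ Set.Icc (0:ℝ) 1 := by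
    intro k hk
    have hD1 := hbdd k hk 1 h1S
    constructor
    · rw [← hmean k hk]
      apply integral_nonneg_of_ae
      filter_upwards [hD1] with ω h using h.1
    · rw [← hmean k hk]
      calc ∫ ω, D k 1 ω ∂P ≤ ∫ _, (1:ℝ) ∂P := by
            apply integral_mono_ae (hDint k hk 1 h1S) (integrable_const 1)
            filter_upwards [hD1] with ω h using h.2
        _ = 1 := by simp
  have hDmean2 : ∀ k ∈ Finset.Icc 1 K, ∀ j ∈ Finset.Icc 1 S, ∫ ω, D k j ω ∂P = μ k := by
    intro k hk j hj
    rw [(hident k hk j hj).integral_eq]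
    exact hmean k hk
  -- sample-mean facts
  have hsmeas : ∀ k n, Measurable (fun ω => sampleMean D k n ω) := by
    intro k n
    unfold sampleMean
    exact (Finset.measurable_sum _ (fun j _ => hDmeas k j)).div_const _
  have hsIcc : ∀ k ∈ Finset.Icc 1 K, ∀ n ∈ Finset.Icc 1 S, ∀ᵐ ω ∂P,
      sampleMean D k n ω ∈ Set.Icc (0:ℝ) 1 := by
    intro k hk n hn
    rw [Finset.mem_Icc] at hn
    have hall : ∀ᵐ ω ∂P, ∀ j ∈ (↑(Finset.Icc 1 n) : Set ℕ), D k j ω ∈ Set.Icc (0:ℝ) 1 := by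
      rw [MeasureTheory.ae_ball_iff (Finset.Icc 1 n).countable_toSet]
      intro j hj
      rw [Finset.mem_coe, Finset.mem_Icc] at hj
      exact hbdd k hk j (by rw [Finset.mem_Icc]; omega)
    have hnr : (0:ℝ) < n := by exact_mod_cast hn.1
    filter_upwards [hall] with ω h
    have hmem : ∀ j ∈ Finset.Icc 1 n, D k j ω ∈ Set.Icc (0:ℝ) 1 :=
      fun j hj => h j (Finset.mem_coe.mpr hj)
    unfold sampleMean
    constructor
    · apply div_nonneg _ hnr.le
      exact Finset.sum_nonneg (fun j hj => (hmem j hj).1)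
    · rw [div_le_one hnr]
      calc ∑ j ∈ Finset.Icc 1 n, D k j ω ≤ ∑ j ∈ Finset.Icc 1 n, (1:ℝ) :=
            Finset.sum_le_sum (fun j hj => (hmem j hj).2)
        _ = n := by simp [Nat.card_Icc]
  have htlmeas : ∀ k n, Measurable (tl k n) := by
    intro k n
    rw [htl]
    exact (((hsmeas k n).sub measurable_const).sub measurable_const).max measurable_const
  have htlint : ∀ k ∈ Finset.Icc 1 K, ∀ n ∈ Finset.Icc 1 S, Integrable (tl k n) P := by
    intro k hk n hn
    apply integrable_of_ae_bound (htlmeas k n).aestronglyMeasurable (C := 1)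
    filter_upwards [hsIcc k hk n hn] with ω h
    rw [htl, abs_le]
    have hμ := hμIcc k hk
    constructor
    · dsimp only
      have := le_max_right (sampleMean D k n ω - μ k - bf n) 0
      linarith
    · dsimp only
      apply max_le _ (by norm_num)
      have := hbf_nonneg n
      have := hμ.1
      have := h.2
      linarith
  -- fourth moment bound
  have hmom : ∀ k ∈ Finset.Icc 1 K, ∀ n ∈ Finset.Icc 1 S,
      ∫ ω, (sampleMean D k n ω - μ k)^4 ∂P ≤ 1/(4*(n:ℝ)^2) := by
    intro k hk n hn
    have hk' := Finset.mem_Icc.mp hk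
    have hn' := Finset.mem_Icc.mp hn
    set W : ℕ → Ω → ℝ := fun j ω' => D k j ω' - μ k with hW
    have hWmeas : ∀ j, Measurable (W j) := fun j => (hDmeas k j).sub measurable_const
    have hμk := hμIcc k hk
    have hWindep : iIndepFun
        (fun j : Fin S => W ((j:ℕ)+1)) P := by
      have hinj : Function.Injective (fun j : Fin S => ((⟨k-1, by omega⟩ : Fin K), j)) := by
        intro a b h
        simpa using congrArg Prod.snd h
      have base := iIndepFun_comp_of_injective hindep _ hinj
      have base2 : iIndepFun
          (fun j : Fin S => D k ((j:ℕ)+1)) P := by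
        have hval : ((⟨k-1, by omega⟩ : Fin K) : ℕ) + 1 = k := by
          show k - 1 + 1 = k
          omega
        have heq : (fun j : Fin S => D k ((j:ℕ)+1))
            = fun j : Fin S => D (((⟨k-1, by omega⟩ : Fin K) : ℕ) + 1) ((j:ℕ)+1) := by
          funext j
          rw [hval]
        rw [heq]
        exact base
      have := base2.comp (fun _ => fun x : ℝ => x - μ k)
        (fun _ => measurable_id.sub measurable_const)
      exact this
    have hWbdd : ∀ j, 1 ≤ j → j ≤ S → ∀ᵐ ω ∂P, |W j ω| ≤ 1 := by
      intro j hj1 hj2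
      filter_upwards [hbdd k hk j (by rw [Finset.mem_Icc]; omega)] with ω h
      rw [hW]
      dsimp only
      rw [abs_le]
      constructor
      · have := h.1; have := hμk.2; linarith
      · have := h.2; have := hμk.1; linarith
    have hWmean : ∀ j, 1 ≤ j → j ≤ S → ∫ ω, W j ω ∂P = 0 := by
      intro j hj1 hj2
      have hjS : j ∈ Finset.Icc 1 S := by rw [Finset.mem_Icc]; omega
      rw [hW]
      dsimp only
      rw [integral_sub (hDint k hk j hjS) (integrable_const _), integral_const]
      rw [hDmean2 k hk j hjS]
      simp
    have hWvar : ∀ j, 1 ≤ j → j ≤ S → ∫ ω, (W j ω)^2 ∂P ≤ 1/4 := by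
      intro j hj1 hj2
      have hjS : j ∈ Finset.Icc 1 S := by rw [Finset.mem_Icc]; omega
      have hintD := hDint k hk j hjS
      have hint_sq : Integrable (fun ω => (D k j ω - 1/2)^2) P := by
        apply integrable_of_ae_bound
          (((hDmeas k j).sub measurable_const).pow_const 2).aestronglyMeasurable (C := 1/4)
        filter_upwards [hbdd k hk j hjS] with ω h
        rw [abs_le]
        simp only [Pi.sub_apply]
        constructor
        · nlinarith [sq_nonneg (D k j ω - 1/2)]
        · nlinarith [h.1, h.2]
      have e : (fun ω => (W j ω)^2)
          = fun ω => (D k j ω - 1/2)^2 + ((1-2*μ k) * D k j ω + (μ k^2 - 1/4)) := by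
        funext ω
        rw [hW]
        dsimp only
        ring
      have hlin : Integrable (fun ω => (1-2*μ k) * D k j ω + (μ k^2 - 1/4)) P :=
        (hintD.const_mul _).add (integrable_const _)
      rw [e, integral_add hint_sq hlin,
        integral_add (hintD.const_mul _) (integrable_const _),
        integral_const_mul, integral_const, hDmean2 k hk j hjS]
      have hsq : ∫ ω, (D k j ω - 1/2)^2 ∂P ≤ 1/4 := by
        calc ∫ ω, (D k j ω - 1/2)^2 ∂P ≤ ∫ _, (1/4 : ℝ) ∂P := by
              apply integral_mono_ae hint_sq (integrable_const _)
              filter_upwards [hbdd k hk j hjS] with ω h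
              nlinarith [h.1, h.2]
          _ = 1/4 := by simp
      simp only [probReal_univ, smul_eq_mul, one_mul]
      nlinarith [sq_nonneg (μ k - 1/2), hsq]
    have key := moment4 P S W hWmeas hWindep hWbdd hWmean hWvar n hn'.2
    have hnr : (0:ℝ) < n := by exact_mod_cast hn'.1
    have hrel : ∀ ω, sampleMean D k n ω - μ k = (∑ j ∈ Finset.Icc 1 n, W j ω) / n := by
      intro ω
      unfold sampleMean
      rw [hW]
      dsimp only
      rw [Finset.sum_sub_distrib, Finset.sum_const, Nat.card_Icc]
      simp only [Nat.add_sub_cancel, nsmul_eq_mul]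
      field_simp
    have e2 : (fun ω => (sampleMean D k n ω - μ k)^4)
        = fun ω => (∑ j ∈ Finset.Icc 1 n, W j ω)^4 / (n:ℝ)^4 := by
      funext ω
      rw [hrel ω]
      ring
    rw [e2, integral_div]
    calc (∫ ω, (∑ j ∈ Finset.Icc 1 n, W j ω)^4 ∂P) / (n:ℝ)^4
        ≤ ((n:ℝ)^2/4) / (n:ℝ)^4 := by gcongr
      _ = 1/(4*(n:ℝ)^2) := by field_simp
  -- per-(k,n) tail expectation bound
  have htail_bound : ∀ k ∈ Finset.Icc 1 K, ∀ n ∈ Finset.Icc 1 S,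
      ∫ ω, tl k n ω ∂P ≤ (if n ≤ M then (Real.sqrt 2/6) * (n:ℝ)^(-(1/2:ℝ))
        else (1/12) * c^3 * (n:ℝ)^(-(5/4:ℝ))) := by
    intro k hk n hn
    have hn' := Finset.mem_Icc.mp hn
    have hnr : (0:ℝ) < n := by exact_mod_cast hn'.1
    have hbfpos : 0 < bf n := by
      rw [hbf]
      have h1 : (0:ℝ) < (2*(n:ℝ))^(-(1/2:ℝ)) := Real.rpow_pos_of_pos (by positivity) _
      have h2 : (0:ℝ) < (n:ℝ)^(-(1/4:ℝ)) := Real.rpow_pos_of_pos hnr _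
      positivity
    have hint4 : Integrable (fun ω => (sampleMean D k n ω - μ k)^4) P := by
      apply integrable_of_ae_bound
        (((hsmeas k n).sub measurable_const).pow_const 4).aestronglyMeasurable (C := 1)
      filter_upwards [hsIcc k hk n hn] with ω h
      have hμk := hμIcc k hk
      rw [abs_pow]
      apply pow_le_one₀ (abs_nonneg _)
      rw [abs_le]
      simp only [Pi.sub_apply]
      constructor
      · have := h.1; have := hμk.2; linarith
      · have := h.2; have := hμk.1; linarith
    have step1 : ∫ ω, tl k n ω ∂P
        ≤ ∫ ω, (sampleMean D k n ω - μ k)^4 / (3*(bf n)^3) ∂P := by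
      apply integral_mono_of_nonneg (Filter.Eventually.of_forall (fun ω => htl_nonneg k n ω))
        (hint4.div_const _)
      apply Filter.Eventually.of_forall
      intro ω
      rw [htl]
      exact quartic_tail_bound _ _ hbfpos
    have step2 : ∫ ω, (sampleMean D k n ω - μ k)^4 / (3*(bf n)^3) ∂P
        ≤ (1/(4*(n:ℝ)^2)) / (3*(bf n)^3) := by
      rw [integral_div]
      gcongr
      exact hmom k hk n hn
    -- now the case analysis
    by_cases hnM : n ≤ M
    · rw [if_pos hnM]
      refine le_trans (le_trans step1 step2) ?_
      have hb1 : (2*(n:ℝ))^(-(1/2:ℝ)) ≤ bf n := by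
        rw [hbf]
        dsimp only
        have h0 : (0:ℝ) ≤ c⁻¹ * (n:ℝ)^(-(1/4:ℝ)) := by
          have : (0:ℝ) ≤ (n:ℝ)^(-(1/4:ℝ)) := Real.rpow_nonneg hnr.le _
          positivity
        linarith
      have hb1pos : (0:ℝ) < (2*(n:ℝ))^(-(1/2:ℝ)) := Real.rpow_pos_of_pos (by positivity) _
      have hmono : (1/(4*(n:ℝ)^2)) / (3*(bf n)^3)
          ≤ (1/(4*(n:ℝ)^2)) / (3*((2*(n:ℝ))^(-(1/2:ℝ)))^3) := by
        have hpow : ((2*(n:ℝ))^(-(1/2:ℝ)))^3 ≤ (bf n)^3 := pow_le_pow_left₀ hb1pos.le hb1 3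
        apply div_le_div_of_nonneg_left (by positivity) (by positivity) (by linarith)
      refine le_trans hmono (le_of_eq ?_)
      have hapos : (0:ℝ) < Real.sqrt 2 := by positivity
      set v : ℝ := (n:ℝ)^((1:ℝ)/2) with hv
      have hvpos : 0 < v := Real.rpow_pos_of_pos hnr _
      have hv4 : v^4 = (n:ℝ)^2 := by
        rw [hv, ← Real.rpow_natCast ((n:ℝ)^((1:ℝ)/2)) 4, ← Real.rpow_mul hnr.le,
          show ((1:ℝ)/2)*((4:ℕ):ℝ) = ((2:ℕ):ℝ) by norm_num, Real.rpow_natCast]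
      have ha2 : (Real.sqrt 2)^2 = 2 := Real.sq_sqrt (by norm_num)
      have hrw1 : (2*(n:ℝ))^(-(1/2:ℝ)) = (Real.sqrt 2 * v)⁻¹ := by
        rw [Real.rpow_neg (by positivity), Real.mul_rpow (by norm_num) hnr.le, hv,
          Real.sqrt_eq_rpow]
      have hrw2 : (n:ℝ)^(-(1/2:ℝ)) = v⁻¹ := by
        rw [Real.rpow_neg hnr.le, hv]
      rw [hrw1, hrw2, ← hv4]
      have ha3 : (Real.sqrt 2)^3 = 2*Real.sqrt 2 := by
        calc (Real.sqrt 2)^3 = (Real.sqrt 2)^2 * Real.sqrt 2 := by ring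
          _ = 2*Real.sqrt 2 := by rw [ha2]
      field_simp
      linear_combination 6 * ha2
    · rw [if_neg hnM]
      refine le_trans (le_trans step1 step2) ?_
      have hb2 : c⁻¹ * (n:ℝ)^(-(1/4:ℝ)) ≤ bf n := by
        rw [hbf]
        dsimp only
        have h0 : (0:ℝ) ≤ (2*(n:ℝ))^(-(1/2:ℝ)) := Real.rpow_nonneg (by positivity) _
        linarith
      have hb2pos : (0:ℝ) < c⁻¹ * (n:ℝ)^(-(1/4:ℝ)) := by
        have : (0:ℝ) < (n:ℝ)^(-(1/4:ℝ)) := Real.rpow_pos_of_pos hnr _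
        positivity
      have hmono : (1/(4*(n:ℝ)^2)) / (3*(bf n)^3)
          ≤ (1/(4*(n:ℝ)^2)) / (3*(c⁻¹ * (n:ℝ)^(-(1/4:ℝ)))^3) := by
        have hpow : (c⁻¹ * (n:ℝ)^(-(1/4:ℝ)))^3 ≤ (bf n)^3 := pow_le_pow_left₀ hb2pos.le hb2 3
        apply div_le_div_of_nonneg_left (by positivity) (by positivity) (by linarith)
      refine le_trans hmono (le_of_eq ?_)
      set u : ℝ := (n:ℝ)^((1:ℝ)/4) with hu
      have hupos : 0 < u := Real.rpow_pos_of_pos hnr _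
      have hu8 : u^8 = (n:ℝ)^2 := by
        rw [hu, ← Real.rpow_natCast ((n:ℝ)^((1:ℝ)/4)) 8, ← Real.rpow_mul hnr.le,
          show ((1:ℝ)/4)*((8:ℕ):ℝ) = ((2:ℕ):ℝ) by norm_num, Real.rpow_natCast]
      have hu5 : u^5 = (n:ℝ)^((5:ℝ)/4) := by
        rw [hu, ← Real.rpow_natCast ((n:ℝ)^((1:ℝ)/4)) 5, ← Real.rpow_mul hnr.le]
        norm_num
      have hrw1 : (n:ℝ)^(-(1/4:ℝ)) = u⁻¹ := by
        rw [Real.rpow_neg hnr.le, hu]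
      have hrw2 : (n:ℝ)^(-(5/4:ℝ)) = (u^5)⁻¹ := by
        rw [show (-(5/4:ℝ)) = -((5:ℝ)/4) by norm_num, Real.rpow_neg hnr.le, hu5]
      rw [hrw1, hrw2, ← hu8]
      field_simp
      ring
  -- γ facts
  set γ : ℕ → ℝ := fun n => Real.sqrt (logPlus ((S:ℝ)/((K:ℝ)*(n:ℝ))) / (n:ℝ)) with hγ
  have hγ_nonneg : ∀ n, 0 ≤ γ n := fun n => Real.sqrt_nonneg _
  have hγ_le : ∀ n : ℕ, 1 ≤ n → γ n ≤ (if n ≤ M then c * (n:ℝ)^(-(3/4:ℝ)) else 0) := by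
    intro n hn1
    have hnr : (0:ℝ) < n := by exact_mod_cast hn1
    by_cases hnM : n ≤ M
    · rw [if_pos hnM]
      set u : ℝ := (n:ℝ)^((1:ℝ)/4) with hu
      have hupos : 0 < u := Real.rpow_pos_of_pos hnr _
      have hu4 : u^4 = (n:ℝ) := by
        rw [hu, ← Real.rpow_natCast ((n:ℝ)^((1:ℝ)/4)) 4, ← Real.rpow_mul hnr.le]
        norm_num
      have hu3 : u^3 = (n:ℝ)^((3:ℝ)/4) := by
        rw [hu, ← Real.rpow_natCast ((n:ℝ)^((1:ℝ)/4)) 3, ← Real.rpow_mul hnr.le]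
        norm_num
      have harg : (S:ℝ)/((K:ℝ)*(n:ℝ)) = c^4/u^4 := by
        rw [hc4, hu4, div_div]
      have h1 : γ n ≤ Real.sqrt (Real.sqrt ((S:ℝ)/((K:ℝ)*(n:ℝ))) / (n:ℝ)) := by
        apply Real.sqrt_le_sqrt
        gcongr
        exact logPlus_le_sqrt _
      refine le_trans h1 (le_of_eq ?_)
      rw [show (-(3/4:ℝ)) = -((3:ℝ)/4) by norm_num, Real.rpow_neg hnr.le, ← hu3]
      rw [harg, show c^4/u^4 = (c^2/u^2)^2 by ring, Real.sqrt_sq (by positivity), ← hu4,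
        show c^2/u^2/(u^4) = (c/u^3)^2 by ring, Real.sqrt_sq (by positivity)]
      field_simp
    · rw [if_neg hnM]
      have hnat : S < K * n := by
        have hmod := Nat.div_add_mod S K
        have hmod2 : S % K < K := Nat.mod_lt _ hK
        have hexp : K*(M+1) = K*(S/K) + K := by rw [hMdef]; ring
        have h1 : S < K * (M+1) := by omega
        calc S < K*(M+1) := h1
          _ ≤ K*n := Nat.mul_le_mul_left _ (by omega)
      have hlt : (S:ℝ)/((K:ℝ)*(n:ℝ)) < 1 := by
        rw [div_lt_one (by positivity)]
        exact_mod_cast hnat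
      have hzero : logPlus ((S:ℝ)/((K:ℝ)*(n:ℝ))) = 0 := by
        unfold logPlus
        rw [if_neg (by linarith)]
      rw [hγ]
      dsimp only
      rw [hzero]
      simp
  have hγsum : ∑ n ∈ Finset.Icc 1 S, γ n ≤ 4 * c^2 := by
    have hMfilter : (Finset.Icc 1 S).filter (fun n => n ≤ M) = Finset.Icc 1 M := by
      ext n
      simp only [Finset.mem_filter, Finset.mem_Icc]
      omega
    calc ∑ n ∈ Finset.Icc 1 S, γ n
        ≤ ∑ n ∈ Finset.Icc 1 S, (if n ≤ M then c * (n:ℝ)^(-(3/4:ℝ)) else 0) := by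
          apply Finset.sum_le_sum
          intro n hn
          exact hγ_le n (Finset.mem_Icc.mp hn).1
      _ = ∑ n ∈ Finset.Icc 1 M, c * (n:ℝ)^(-(3/4:ℝ)) := by
          rw [← Finset.sum_filter, hMfilter]
      _ = c * ∑ n ∈ Finset.Icc 1 M, (n:ℝ)^(-(3/4:ℝ)) := by rw [Finset.mul_sum]
      _ ≤ c * (4 * (M:ℝ)^((1/4:ℝ))) := by
          apply mul_le_mul_of_nonneg_left _ hcpos.le
          calc ∑ n ∈ Finset.Icc 1 M, (n:ℝ)^(-(3/4:ℝ))
              = ∑ n ∈ Finset.Icc 1 M, (n:ℝ)^((1/4:ℝ)-1) := by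
                apply Finset.sum_congr rfl
                intro n _
                norm_num
            _ ≤ (M:ℝ)^((1/4:ℝ)) / (1/4) := sum_rpow_le (1/4) (by norm_num) (by norm_num) M
            _ = 4 * (M:ℝ)^((1/4:ℝ)) := by ring
      _ ≤ c * (4 * c) := by
          have hMle : (M:ℝ) ≤ c^4 := by
            rw [hc4, hMdef]
            exact_mod_cast Nat.cast_div_le
          have : (M:ℝ)^((1/4:ℝ)) ≤ c := rpow_quarter_le (by positivity) hcpos.le hMle
          have h4 : (0:ℝ) ≤ 4 := by norm_num
          nlinarith [hcpos, this, Real.rpow_nonneg (show (0:ℝ) ≤ (M:ℝ) by positivity) ((1/4:ℝ))]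
      _ = 4 * c^2 := by ring
  -- master pointwise bound
  have hmaster : ∀ ω, (∑ s ∈ Finset.Icc 1 S,
      (if 1 ≤ selCount sel (sel s ω) (s - 1) ω then
        max (ucbHat S K D (sel s ω) (selCount sel (sel s ω) (s - 1) ω) ω - μ (sel s ω)) 0
      else 0))
      ≤ (4 + Real.sqrt 2 + 4/3) * ((K:ℝ)*c^2)
        + ∑ k ∈ Finset.Icc 1 K, ∑ n ∈ Finset.Icc 1 S, tl k n ω := by
    intro ω
    have hstep := sum_selected_le S K sel ω (fun s hs => hselrange s hs ω)
      (fun k n => max (ucbHat S K D k n ω - μ k) 0) (fun k n => le_max_right _ _)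
    refine le_trans hstep ?_
    have hNle : ∀ k, selCount sel k S ω ≤ S := fun k => selCount_le sel k S ω
    have hNsum : ∑ k ∈ Finset.Icc 1 K, selCount sel k S ω = S :=
      selCount_sum sel S K ω (fun s hs => hselrange s hs ω)
    have hper : ∀ k ∈ Finset.Icc 1 K, ∀ n ∈ Finset.Icc 1 S,
        (if n ≤ selCount sel k S ω then max (ucbHat S K D k n ω - μ k) 0 else 0)
          ≤ γ n + (if n ≤ selCount sel k S ω then bf n else 0) + tl k n ω := by
      intro k hk n hn
      by_cases h : n ≤ selCount sel k S ω
      · rw [if_pos h, if_pos h]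
        have hucb : ucbHat S K D k n ω = sampleMean D k n ω + γ n := rfl
        rw [hucb]
        calc max (sampleMean D k n ω + γ n - μ k) 0
            = max ((sampleMean D k n ω - μ k) + γ n) 0 := by ring_nf
          _ ≤ γ n + bf n + max ((sampleMean D k n ω - μ k) - bf n) 0 :=
              max_shift_le _ _ _ (hγ_nonneg n) (hbf_nonneg n)
          _ = γ n + bf n + tl k n ω := by
              rw [htl]
          _ ≤ γ n + bf n + tl k n ω := le_rfl
      · rw [if_neg h, if_neg h]
        have h1 := htl_nonneg k n ω
        have h2 := hγ_nonneg n
        linarith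
    refine le_trans (Finset.sum_le_sum (fun k hk => Finset.sum_le_sum (hper k hk))) ?_
    have hsplit : ∑ k ∈ Finset.Icc 1 K, ∑ n ∈ Finset.Icc 1 S,
        (γ n + (if n ≤ selCount sel k S ω then bf n else 0) + tl k n ω)
        = (∑ k ∈ Finset.Icc 1 K, ∑ n ∈ Finset.Icc 1 S, γ n)
          + (∑ k ∈ Finset.Icc 1 K, ∑ n ∈ Finset.Icc 1 S,
              (if n ≤ selCount sel k S ω then bf n else 0))
          + ∑ k ∈ Finset.Icc 1 K, ∑ n ∈ Finset.Icc 1 S, tl k n ω := by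
      rw [← Finset.sum_add_distrib, ← Finset.sum_add_distrib]
      apply Finset.sum_congr rfl
      intro k _
      rw [← Finset.sum_add_distrib, ← Finset.sum_add_distrib]
    rw [hsplit]
    have hA : ∑ k ∈ Finset.Icc 1 K, ∑ n ∈ Finset.Icc 1 S, γ n ≤ (K:ℝ) * (4*c^2) := by
      rw [Finset.sum_const, Nat.card_Icc, Nat.add_sub_cancel, nsmul_eq_mul]
      exact mul_le_mul_of_nonneg_left hγsum (by positivity)
    -- tangent sums
    have hNcast : ∑ k ∈ Finset.Icc 1 K, ((selCount sel k S ω : ℕ):ℝ) = (S:ℝ) := by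
      rw [← Nat.cast_sum, hNsum]
    have ht1 : ∑ k ∈ Finset.Icc 1 K, ((selCount sel k S ω : ℕ):ℝ)^((1:ℝ)/2)
        ≤ (K:ℝ)*c^2 := by
      have htanall : ∀ k ∈ Finset.Icc 1 K, ((selCount sel k S ω : ℕ):ℝ)^((1:ℝ)/2)
          ≤ (1/2) * ((selCount sel k S ω : ℕ):ℝ) * (c^2)⁻¹ + (1 - 1/2) * c^2 := by
        intro k _
        have h := tangent_rpow (1/2) ((selCount sel k S ω : ℕ):ℝ) ((S:ℝ)/K)
          (by norm_num) (by norm_num) (by positivity) hSKr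
        have e1 : ((S:ℝ)/K)^((1:ℝ)/2 - 1) = (c^2)⁻¹ := by
          rw [show ((1:ℝ)/2 - 1) = -(((2:ℕ):ℝ)/4) by norm_num, Real.rpow_neg hSKr.le, hgen 2]
        have e2 : ((S:ℝ)/K)^((1:ℝ)/2) = c^2 := by
          rw [show ((1:ℝ)/2) = (((2:ℕ):ℝ)/4) by norm_num, hgen 2]
        rw [e1, e2] at h
        exact h
      calc ∑ k ∈ Finset.Icc 1 K, ((selCount sel k S ω : ℕ):ℝ)^((1:ℝ)/2)
          ≤ ∑ k ∈ Finset.Icc 1 K, ((1/2) * ((selCount sel k S ω : ℕ):ℝ) * (c^2)⁻¹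
              + (1 - 1/2) * c^2) := Finset.sum_le_sum htanall
        _ = (1/2) * (c^2)⁻¹ * (∑ k ∈ Finset.Icc 1 K, ((selCount sel k S ω : ℕ):ℝ))
            + (K:ℝ) * ((1 - 1/2) * c^2) := by
            rw [Finset.sum_add_distrib, Finset.sum_const, Nat.card_Icc, Nat.add_sub_cancel,
              nsmul_eq_mul, ← Finset.sum_mul, ← Finset.mul_sum]
            ring
        _ = (1/2) * (c^2)⁻¹ * (S:ℝ) + (K:ℝ) * ((1 - 1/2) * c^2) := by rw [hNcast]
        _ = (K:ℝ)*c^2 := by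
            rw [← hKc4]
            field_simp
            ring
    have ht2 : ∑ k ∈ Finset.Icc 1 K, ((selCount sel k S ω : ℕ):ℝ)^((3:ℝ)/4)
        ≤ (K:ℝ)*c^3 := by
      have htanall : ∀ k ∈ Finset.Icc 1 K, ((selCount sel k S ω : ℕ):ℝ)^((3:ℝ)/4)
          ≤ (3/4) * ((selCount sel k S ω : ℕ):ℝ) * c⁻¹ + (1 - 3/4) * c^3 := by
        intro k _
        have h := tangent_rpow (3/4) ((selCount sel k S ω : ℕ):ℝ) ((S:ℝ)/K)
          (by norm_num) (by norm_num) (by positivity) hSKr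
        have e1 : ((S:ℝ)/K)^((3:ℝ)/4 - 1) = c⁻¹ := by
          rw [show ((3:ℝ)/4 - 1) = -(((1:ℕ):ℝ)/4) by norm_num, Real.rpow_neg hSKr.le, hgen 1,
            pow_one]
        have e2 : ((S:ℝ)/K)^((3:ℝ)/4) = c^3 := by
          rw [show ((3:ℝ)/4) = (((3:ℕ):ℝ)/4) by norm_num, hgen 3]
        rw [e1, e2] at h
        exact h
      calc ∑ k ∈ Finset.Icc 1 K, ((selCount sel k S ω : ℕ):ℝ)^((3:ℝ)/4)
          ≤ ∑ k ∈ Finset.Icc 1 K, ((3/4) * ((selCount sel k S ω : ℕ):ℝ) * c⁻¹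
              + (1 - 3/4) * c^3) := Finset.sum_le_sum htanall
        _ = (3/4) * c⁻¹ * (∑ k ∈ Finset.Icc 1 K, ((selCount sel k S ω : ℕ):ℝ))
            + (K:ℝ) * ((1 - 3/4) * c^3) := by
            rw [Finset.sum_add_distrib, Finset.sum_const, Nat.card_Icc, Nat.add_sub_cancel,
              nsmul_eq_mul, ← Finset.sum_mul, ← Finset.mul_sum]
            ring
        _ = (3/4) * c⁻¹ * (S:ℝ) + (K:ℝ) * ((1 - 3/4) * c^3) := by rw [hNcast]
        _ = (K:ℝ)*c^3 := by
            rw [← hKc4]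
            field_simp
            ring
    have hB : ∑ k ∈ Finset.Icc 1 K, ∑ n ∈ Finset.Icc 1 S,
        (if n ≤ selCount sel k S ω then bf n else 0)
        ≤ Real.sqrt 2 * ((K:ℝ)*c^2) + (4/3) * ((K:ℝ)*c^2) := by
      have hinner : ∀ k, ∑ n ∈ Finset.Icc 1 S, (if n ≤ selCount sel k S ω then bf n else 0)
          = ∑ n ∈ Finset.Icc 1 (selCount sel k S ω), bf n := by
        intro k
        rw [← Finset.sum_filter]
        congr 1
        ext n
        simp only [Finset.mem_filter, Finset.mem_Icc]
        have := hNle k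
        omega
      have hk2 : ∀ k, ∑ n ∈ Finset.Icc 1 (selCount sel k S ω), bf n
          ≤ Real.sqrt 2 * ((selCount sel k S ω : ℕ):ℝ)^((1:ℝ)/2)
            + (4/3) * c⁻¹ * ((selCount sel k S ω : ℕ):ℝ)^((3:ℝ)/4) := by
        intro k
        set N := selCount sel k S ω with hNk
        have hp1 : ∑ n ∈ Finset.Icc 1 N, (2*(n:ℝ))^(-(1/2:ℝ))
            ≤ Real.sqrt 2 * ((N:ℕ):ℝ)^((1:ℝ)/2) := by
          have hterm : ∀ n ∈ Finset.Icc 1 N, (2*(n:ℝ))^(-(1/2:ℝ))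
              = (2:ℝ)^(-(1/2:ℝ)) * (n:ℝ)^((1/2:ℝ)-1) := by
            intro n hn
            rw [Real.mul_rpow (by norm_num) (by positivity)]
            congr 1
            norm_num
          rw [Finset.sum_congr rfl hterm, ← Finset.mul_sum]
          have hsum := sum_rpow_le (1/2) (by norm_num) (by norm_num) N
          have h2pos : (0:ℝ) < (2:ℝ)^(-(1/2:ℝ)) := Real.rpow_pos_of_pos (by norm_num) _
          calc (2:ℝ)^(-(1/2:ℝ)) * ∑ n ∈ Finset.Icc 1 N, (n:ℝ)^((1/2:ℝ)-1)
              ≤ (2:ℝ)^(-(1/2:ℝ)) * (((N:ℕ):ℝ)^((1/2:ℝ))/(1/2)) :=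
                mul_le_mul_of_nonneg_left hsum h2pos.le
            _ = Real.sqrt 2 * ((N:ℕ):ℝ)^((1:ℝ)/2) := by
                rw [show ((2:ℝ)^(-(1/2:ℝ))) = (Real.sqrt 2)⁻¹ by
                  rw [Real.rpow_neg (by norm_num), Real.sqrt_eq_rpow]]
                have hs2 : (Real.sqrt 2) > 0 := by positivity
                have hs22 : (Real.sqrt 2)^2 = 2 := Real.sq_sqrt (by norm_num)
                rw [show ((1/2:ℝ)) = ((1:ℝ)/2) by norm_num]
                field_simp
                nlinarith [hs22, hs2, Real.rpow_nonneg (show (0:ℝ) ≤ ((N:ℕ):ℝ) by positivity) ((1:ℝ)/2)]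
        have hp2 : ∑ n ∈ Finset.Icc 1 N, c⁻¹ * (n:ℝ)^(-(1/4:ℝ))
            ≤ (4/3) * c⁻¹ * ((N:ℕ):ℝ)^((3:ℝ)/4) := by
          rw [← Finset.mul_sum]
          have hterm : ∀ n ∈ Finset.Icc 1 N, (n:ℝ)^(-(1/4:ℝ)) = (n:ℝ)^((3/4:ℝ)-1) := by
            intro n hn
            congr 1
            norm_num
          rw [Finset.sum_congr rfl hterm]
          have hsum := sum_rpow_le (3/4) (by norm_num) (by norm_num) N
          have hcinv : (0:ℝ) ≤ c⁻¹ := by positivity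
          calc c⁻¹ * ∑ n ∈ Finset.Icc 1 N, (n:ℝ)^((3/4:ℝ)-1)
              ≤ c⁻¹ * (((N:ℕ):ℝ)^((3/4:ℝ))/(3/4)) := mul_le_mul_of_nonneg_left hsum hcinv
            _ = (4/3) * c⁻¹ * ((N:ℕ):ℝ)^((3:ℝ)/4) := by
                rw [show ((3/4:ℝ)) = ((3:ℝ)/4) by norm_num]
                ring
        calc ∑ n ∈ Finset.Icc 1 N, bf n
            = ∑ n ∈ Finset.Icc 1 N, (2*(n:ℝ))^(-(1/2:ℝ))
              + ∑ n ∈ Finset.Icc 1 N, c⁻¹ * (n:ℝ)^(-(1/4:ℝ)) := by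
              rw [← Finset.sum_add_distrib]
          _ ≤ Real.sqrt 2 * ((N:ℕ):ℝ)^((1:ℝ)/2) + (4/3) * c⁻¹ * ((N:ℕ):ℝ)^((3:ℝ)/4) := by
              exact add_le_add hp1 hp2
      calc ∑ k ∈ Finset.Icc 1 K, ∑ n ∈ Finset.Icc 1 S,
            (if n ≤ selCount sel k S ω then bf n else 0)
          = ∑ k ∈ Finset.Icc 1 K, ∑ n ∈ Finset.Icc 1 (selCount sel k S ω), bf n :=
            Finset.sum_congr rfl (fun k _ => hinner k)
        _ ≤ ∑ k ∈ Finset.Icc 1 K, (Real.sqrt 2 * ((selCount sel k S ω : ℕ):ℝ)^((1:ℝ)/2)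
            + (4/3) * c⁻¹ * ((selCount sel k S ω : ℕ):ℝ)^((3:ℝ)/4)) :=
            Finset.sum_le_sum (fun k _ => hk2 k)
        _ = Real.sqrt 2 * (∑ k ∈ Finset.Icc 1 K, ((selCount sel k S ω : ℕ):ℝ)^((1:ℝ)/2))
            + (4/3) * c⁻¹ * (∑ k ∈ Finset.Icc 1 K, ((selCount sel k S ω : ℕ):ℝ)^((3:ℝ)/4)) := by
            rw [Finset.sum_add_distrib, ← Finset.mul_sum, ← Finset.mul_sum]
        _ ≤ Real.sqrt 2 * ((K:ℝ)*c^2) + (4/3) * c⁻¹ * ((K:ℝ)*c^3) := by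
            apply add_le_add
            · exact mul_le_mul_of_nonneg_left ht1 (Real.sqrt_nonneg 2)
            · apply mul_le_mul_of_nonneg_left ht2
              positivity
        _ = Real.sqrt 2 * ((K:ℝ)*c^2) + (4/3) * ((K:ℝ)*c^2) := by
            field_simp
    have htlnn : (0:ℝ) ≤ ∑ k ∈ Finset.Icc 1 K, ∑ n ∈ Finset.Icc 1 S, tl k n ω :=
      Finset.sum_nonneg (fun k _ => Finset.sum_nonneg (fun n _ => htl_nonneg k n ω))
    nlinarith [hA, hB]
  -- expectation assembly
  have hsum_int : Integrable (fun ω => ∑ k ∈ Finset.Icc 1 K, ∑ n ∈ Finset.Icc 1 S, tl k n ω) P := by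
    apply integrable_finset_sum
    intro k hk
    apply integrable_finset_sum
    intro n hn
    exact htlint k hk n hn
  have hRHSint : Integrable (fun ω => (4 + Real.sqrt 2 + 4/3) * ((K:ℝ)*c^2)
      + ∑ k ∈ Finset.Icc 1 K, ∑ n ∈ Finset.Icc 1 S, tl k n ω) P :=
    (integrable_const _).add hsum_int
  have hLHS_nonneg : ∀ ω, (0:ℝ) ≤ ∑ s ∈ Finset.Icc 1 S,
      (if 1 ≤ selCount sel (sel s ω) (s - 1) ω then
        max (ucbHat S K D (sel s ω) (selCount sel (sel s ω) (s - 1) ω) ω - μ (sel s ω)) 0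
      else 0) := by
    intro ω
    apply Finset.sum_nonneg
    intro s _
    split
    · exact le_max_right _ _
    · exact le_rfl
  have hmono := integral_mono_of_nonneg
    (Filter.Eventually.of_forall hLHS_nonneg) hRHSint (Filter.Eventually.of_forall hmaster)
  -- tail sum of expectations
  have htail_total : ∑ k ∈ Finset.Icc 1 K, ∑ n ∈ Finset.Icc 1 S, ∫ ω, tl k n ω ∂P
      ≤ (Real.sqrt 2/3 + ((4:ℝ)/3)^((1:ℝ)/4)/3) * ((K:ℝ)*c^2) := by
    have hMc : (3/4)*c^4 ≤ (M:ℝ) := by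
      have hmod := Nat.div_add_mod S K
      have hmod2 : S % K < K := Nat.mod_lt _ hK
      have hexp : K*(M+1) = K*(S/K) + K := by rw [hMdef]; ring
      have h1 : (S:ℝ) < (K:ℝ) * ((M:ℝ)+1) := by
        have h1n : S < K * (M+1) := by omega
        exact_mod_cast h1n
      have h2 : c^4 < (M:ℝ) + 1 := by
        rw [hc4, div_lt_iff₀ hKr]
        nlinarith [h1]
      have h3 : (4:ℝ) ≤ c^4 := by
        rw [hc4, le_div_iff₀ hKr]
        exact_mod_cast (by omega : 4*K ≤ S)
      linarith
    have hMquarter : (M:ℝ)^(-(1/4:ℝ)) ≤ ((4:ℝ)/3)^((1:ℝ)/4) * c⁻¹ := by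
      have hMpos : (0:ℝ) < (M:ℝ) := by exact_mod_cast (by omega : 0 < M)
      have h1 : ((3/4)*c^4)^((1:ℝ)/4) ≤ (M:ℝ)^((1:ℝ)/4) :=
        Real.rpow_le_rpow (by positivity) hMc (by norm_num)
      have h2 : (0:ℝ) < ((3/4)*c^4)^((1:ℝ)/4) := Real.rpow_pos_of_pos (by positivity) _
      have h3 : (M:ℝ)^(-(1/4:ℝ)) = ((M:ℝ)^((1:ℝ)/4))⁻¹ := by
        rw [Real.rpow_neg hMpos.le]
      have h4 : ((3/4)*c^4)^((1:ℝ)/4) = ((3:ℝ)/4)^((1:ℝ)/4) * c := by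
        rw [Real.mul_rpow (by norm_num) (by positivity)]
        congr 1
        rw [← Real.rpow_natCast c 4, ← Real.rpow_mul hcpos.le]
        norm_num
      have h5 : ((M:ℝ)^((1:ℝ)/4))⁻¹ ≤ (((3/4)*c^4)^((1:ℝ)/4))⁻¹ := by
        apply inv_anti₀ h2 h1
      have h6 : (((3:ℝ)/4)^((1:ℝ)/4) * c)⁻¹ = ((4:ℝ)/3)^((1:ℝ)/4) * c⁻¹ := by
        rw [mul_inv]
        congr 1
        rw [← Real.inv_rpow (by norm_num : (0:ℝ) ≤ 3/4)]
        norm_num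
      rw [h3]
      calc ((M:ℝ)^((1:ℝ)/4))⁻¹ ≤ (((3/4)*c^4)^((1:ℝ)/4))⁻¹ := h5
        _ = ((4:ℝ)/3)^((1:ℝ)/4) * c⁻¹ := by rw [h4, h6]
    have hMhalf : (M:ℝ)^((1/2:ℝ)) ≤ c^2 := by
      have hMle : (M:ℝ) ≤ c^4 := by
        rw [hc4, hMdef]
        exact_mod_cast Nat.cast_div_le
      have h1 : (M:ℝ)^((1/2:ℝ)) ≤ (c^4)^((1/2:ℝ)) :=
        Real.rpow_le_rpow (by positivity) hMle (by norm_num)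
      have h2 : (c^4:ℝ)^((1/2:ℝ)) = c^2 := by
        rw [show (c^4) = (c^2)^2 by ring, ← Real.rpow_natCast (c^2) 2,
          ← Real.rpow_mul (sq_nonneg c)]
        norm_num
      rw [h2] at h1
      exact h1
    have hperk : ∀ k ∈ Finset.Icc 1 K, ∑ n ∈ Finset.Icc 1 S, ∫ ω, tl k n ω ∂P
        ≤ (Real.sqrt 2/3 + ((4:ℝ)/3)^((1:ℝ)/4)/3) * c^2 := by
      intro k hk
      have hsplitn : ∑ n ∈ Finset.Icc 1 S,
          (if n ≤ M then (Real.sqrt 2/6) * (n:ℝ)^(-(1/2:ℝ))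
            else (1/12) * c^3 * (n:ℝ)^(-(5/4:ℝ)))
          = ∑ n ∈ Finset.Icc 1 M, (Real.sqrt 2/6) * (n:ℝ)^(-(1/2:ℝ))
            + ∑ n ∈ Finset.Icc (M+1) S, (1/12) * c^3 * (n:ℝ)^(-(5/4:ℝ)) := by
        rw [Finset.sum_ite]
        congr 1
        · apply Finset.sum_congr _ (fun x _ => rfl)
          ext n
          simp only [Finset.mem_filter, Finset.mem_Icc]
          omega
        · apply Finset.sum_congr _ (fun x _ => rfl)
          ext n
          simp only [Finset.mem_filter, Finset.mem_Icc]
          omega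
      have hpart1 : ∑ n ∈ Finset.Icc 1 M, (Real.sqrt 2/6) * (n:ℝ)^(-(1/2:ℝ))
          ≤ (Real.sqrt 2/3) * c^2 := by
        rw [← Finset.mul_sum]
        have hterm : ∀ n ∈ Finset.Icc 1 M, (n:ℝ)^(-(1/2:ℝ)) = (n:ℝ)^((1/2:ℝ)-1) := by
          intro n _
          congr 1
          norm_num
        rw [Finset.sum_congr rfl hterm]
        have hsum := sum_rpow_le (1/2) (by norm_num) (by norm_num) M
        have hs2 : (0:ℝ) ≤ Real.sqrt 2/6 := by positivity
        calc (Real.sqrt 2/6) * ∑ n ∈ Finset.Icc 1 M, (n:ℝ)^((1/2:ℝ)-1)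
            ≤ (Real.sqrt 2/6) * ((M:ℝ)^((1/2:ℝ))/(1/2)) := mul_le_mul_of_nonneg_left hsum hs2
          _ = (Real.sqrt 2/3) * (M:ℝ)^((1/2:ℝ)) := by ring
          _ ≤ (Real.sqrt 2/3) * c^2 := by
              apply mul_le_mul_of_nonneg_left hMhalf (by positivity)
      have hpart2 : ∑ n ∈ Finset.Icc (M+1) S, (1/12) * c^3 * (n:ℝ)^(-(5/4:ℝ))
          ≤ (((4:ℝ)/3)^((1:ℝ)/4)/3) * c^2 := by
        rw [← Finset.mul_sum]
        have hterm : ∀ n ∈ Finset.Icc (M+1) S, (n:ℝ)^(-(5/4:ℝ)) = (n:ℝ)^(-(5/4:ℝ)) :=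
          fun n _ => rfl
        have hsum := sum_rpow_tail M (by omega) S
        have hc3 : (0:ℝ) ≤ (1/12) * c^3 := by positivity
        calc (1/12) * c^3 * ∑ n ∈ Finset.Icc (M+1) S, (n:ℝ)^(-(5/4:ℝ))
            ≤ (1/12) * c^3 * (4 * (M:ℝ)^(-(1/4:ℝ))) := mul_le_mul_of_nonneg_left hsum hc3
          _ ≤ (1/12) * c^3 * (4 * (((4:ℝ)/3)^((1:ℝ)/4) * c⁻¹)) := by
              apply mul_le_mul_of_nonneg_left _ hc3
              apply mul_le_mul_of_nonneg_left hMquarter (by norm_num)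
          _ = (((4:ℝ)/3)^((1:ℝ)/4)/3) * c^2 := by
              field_simp
              ring
      calc ∑ n ∈ Finset.Icc 1 S, ∫ ω, tl k n ω ∂P
          ≤ ∑ n ∈ Finset.Icc 1 S,
            (if n ≤ M then (Real.sqrt 2/6) * (n:ℝ)^(-(1/2:ℝ))
              else (1/12) * c^3 * (n:ℝ)^(-(5/4:ℝ))) :=
            Finset.sum_le_sum (fun n hn => htail_bound k hk n hn)
        _ = ∑ n ∈ Finset.Icc 1 M, (Real.sqrt 2/6) * (n:ℝ)^(-(1/2:ℝ))
            + ∑ n ∈ Finset.Icc (M+1) S, (1/12) * c^3 * (n:ℝ)^(-(5/4:ℝ)) := hsplitn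
        _ ≤ (Real.sqrt 2/3) * c^2 + (((4:ℝ)/3)^((1:ℝ)/4)/3) * c^2 := add_le_add hpart1 hpart2
        _ = (Real.sqrt 2/3 + ((4:ℝ)/3)^((1:ℝ)/4)/3) * c^2 := by ring
    calc ∑ k ∈ Finset.Icc 1 K, ∑ n ∈ Finset.Icc 1 S, ∫ ω, tl k n ω ∂P
        ≤ ∑ k ∈ Finset.Icc 1 K, (Real.sqrt 2/3 + ((4:ℝ)/3)^((1:ℝ)/4)/3) * c^2 :=
          Finset.sum_le_sum hperk
      _ = (K:ℝ) * ((Real.sqrt 2/3 + ((4:ℝ)/3)^((1:ℝ)/4)/3) * c^2) := by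
          rw [Finset.sum_const, Nat.card_Icc, Nat.add_sub_cancel, nsmul_eq_mul]
      _ = (Real.sqrt 2/3 + ((4:ℝ)/3)^((1:ℝ)/4)/3) * ((K:ℝ)*c^2) := by ring
  -- put it together
  have hint_eq : ∫ ω, ((4 + Real.sqrt 2 + 4/3) * ((K:ℝ)*c^2)
      + ∑ k ∈ Finset.Icc 1 K, ∑ n ∈ Finset.Icc 1 S, tl k n ω) ∂P
      = (4 + Real.sqrt 2 + 4/3) * ((K:ℝ)*c^2)
        + ∑ k ∈ Finset.Icc 1 K, ∑ n ∈ Finset.Icc 1 S, ∫ ω, tl k n ω ∂P := by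
    rw [integral_add (integrable_const _) hsum_int, integral_const]
    simp only [probReal_univ, smul_eq_mul, one_mul]
    congr 1
    rw [integral_finset_sum _ (fun k hk =>
      integrable_finset_sum _ (fun n hn => htlint k hk n hn))]
    apply Finset.sum_congr rfl
    intro k hk
    rw [integral_finset_sum _ (fun n hn => htlint k hk n hn)]
  have hbridge : Real.sqrt ((S:ℝ)*K) = (K:ℝ)*c^2 := by
    rw [show (S:ℝ)*K = ((K:ℝ)*c^2)^2 by rw [← hKc4]; ring]
    exact Real.sqrt_sq (by positivity)
  have hs2le : Real.sqrt 2 ≤ 1.5 := by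
    rw [show (1.5:ℝ) = Real.sqrt (1.5^2) from (Real.sqrt_sq (by norm_num)).symm]
    apply Real.sqrt_le_sqrt
    norm_num
  have h43le : ((4:ℝ)/3)^((1:ℝ)/4) ≤ 1.1 :=
    rpow_quarter_le (by norm_num) (by norm_num) (by norm_num)
  have hKc2 : (0:ℝ) < (K:ℝ)*c^2 := by positivity
  calc ∫ ω, ∑ s ∈ Finset.Icc 1 S,
      (if 1 ≤ selCount sel (sel s ω) (s - 1) ω then
        max (ucbHat S K D (sel s ω) (selCount sel (sel s ω) (s - 1) ω) ω - μ (sel s ω)) 0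
      else 0) ∂P
      ≤ ∫ ω, ((4 + Real.sqrt 2 + 4/3) * ((K:ℝ)*c^2)
          + ∑ k ∈ Finset.Icc 1 K, ∑ n ∈ Finset.Icc 1 S, tl k n ω) ∂P := hmono
    _ = (4 + Real.sqrt 2 + 4/3) * ((K:ℝ)*c^2)
        + ∑ k ∈ Finset.Icc 1 K, ∑ n ∈ Finset.Icc 1 S, ∫ ω, tl k n ω ∂P := hint_eq
    _ ≤ (4 + Real.sqrt 2 + 4/3) * ((K:ℝ)*c^2)
        + (Real.sqrt 2/3 + ((4:ℝ)/3)^((1:ℝ)/4)/3) * ((K:ℝ)*c^2) := by linarith [htail_total]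
    _ ≤ 8 * Real.sqrt ((S:ℝ)*K) := by
        rw [hbridge]
        nlinarith [hs2le, h43le, hKc2, Real.sqrt_nonneg 2,
          Real.rpow_nonneg (show (0:ℝ) ≤ (4:ℝ)/3 by norm_num) ((1:ℝ)/4)]
end

section
/- Fix integers K and S with 2 ≤ K and 4K ≤ S. Let k : {1,…,S} → {1,…,K} be any function and set N_j(s) = #{u ∈ {1,…,s} : k(u) = j} with N_j(0) = 0. Define w(s) = 1 if N_{k(s)}(s−1) = 0, and w(s) = min( √(2·log(K) / N_{k(s)}(s−1)), 1 ) otherwise. Then Σ_{s=1}^S w(s) ≤ (1 + 2√2)·√(K S log(K)). -/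
open Finset Real

/-- rank-sum identity -/
lemma rank_sum (A : Finset ℕ) (f : ℕ → ℝ) :
    ∑ s ∈ A, f ((A.filter (fun u => u < s)).card) = ∑ i ∈ Finset.range A.card, f i := by
  induction A using Finset.induction_on_max with
  | empty => simp
  | insert a A ha ih =>
    have hnot : a ∉ A := fun h => lt_irrefl a (ha a h)
    rw [Finset.sum_insert hnot, Finset.card_insert_of_notMem hnot, Finset.sum_range_succ]
    have h1 : (insert a A).filter (fun u => u < a) = A := by
      ext x
      simp only [Finset.mem_filter, Finset.mem_insert]
      constructor
      · rintro ⟨h | h, hlt⟩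
        · exact absurd (h ▸ hlt) (lt_irrefl a)
        · exact h
      · intro hx; exact ⟨Or.inr hx, ha x hx⟩
    have h2 : ∀ s ∈ A, (insert a A).filter (fun u => u < s) = A.filter (fun u => u < s) := by
      intro s hs
      ext x
      simp only [Finset.mem_filter, Finset.mem_insert]
      constructor
      · rintro ⟨h | h, hlt⟩
        · exact absurd (h ▸ hlt) (not_lt.2 (ha s hs).le)
        · exact ⟨h, hlt⟩
      · rintro ⟨h, hlt⟩; exact ⟨Or.inr h, hlt⟩
    rw [h1, Finset.sum_congr rfl (fun s hs => by rw [h2 s hs]), ih, add_comm]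

/-- sum of 1/sqrt -/
lemma sum_inv_sqrt (m : ℕ) : ∑ i ∈ Finset.Icc 1 m, (1 : ℝ) / Real.sqrt i ≤ 2 * Real.sqrt m := by
  induction m with
  | zero => simp
  | succ m ih =>
    rw [Finset.sum_Icc_succ_top (by omega)]
    have hb : (0:ℝ) < Real.sqrt (m+1) := Real.sqrt_pos.2 (by positivity)
    have ha : (0:ℝ) ≤ Real.sqrt m := Real.sqrt_nonneg _
    have ha2 : Real.sqrt m ^ 2 = (m:ℝ) := Real.sq_sqrt (by positivity)
    have hb2 : Real.sqrt (m+1) ^ 2 = (m:ℝ)+1 := Real.sq_sqrt (by positivity)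
    have key : (1:ℝ) / Real.sqrt (m+1) ≤ 2 * Real.sqrt (m+1) - 2 * Real.sqrt m := by
      rw [div_le_iff₀ hb]
      nlinarith [sq_nonneg (Real.sqrt (m+1) - Real.sqrt m)]
    push_cast
    linarith

lemma arm_bound (L : ℝ) (hL : 0 ≤ L) (n : ℕ) :
    ∑ i ∈ Finset.range n, (if i = 0 then (1:ℝ) else min (Real.sqrt (2 * L / i)) 1)
      ≤ 1 + 2 * Real.sqrt (2 * L * n) := by
  rcases Nat.eq_zero_or_pos n with hn | hn
  · subst hn; simp
  have hr : Finset.range n = insert 0 (Finset.Icc 1 (n-1)) := by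
    ext x; simp [Finset.mem_range, Finset.mem_Icc]; omega
  rw [hr, Finset.sum_insert (by simp)]
  rw [if_pos rfl]
  have step1 : ∑ i ∈ Finset.Icc 1 (n-1), (if i = 0 then (1:ℝ) else min (Real.sqrt (2 * L / i)) 1)
      ≤ ∑ i ∈ Finset.Icc 1 (n-1), Real.sqrt (2 * L) * (1 / Real.sqrt i) := by
    apply Finset.sum_le_sum
    intro i hi
    have hi1 : 1 ≤ i := (Finset.mem_Icc.1 hi).1
    rw [if_neg (by omega)]
    calc min (Real.sqrt (2 * L / i)) 1 ≤ Real.sqrt (2 * L / i) := min_le_left _ _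
      _ = Real.sqrt (2 * L) * (1 / Real.sqrt i) := by
          rw [Real.sqrt_div (by positivity) (i:ℝ), div_eq_mul_one_div]
  have step2 : ∑ i ∈ Finset.Icc 1 (n-1), Real.sqrt (2 * L) * (1 / Real.sqrt i)
      ≤ Real.sqrt (2 * L) * (2 * Real.sqrt ((n-1 : ℕ) : ℝ)) := by
    rw [← Finset.mul_sum]
    exact mul_le_mul_of_nonneg_left (sum_inv_sqrt (n-1)) (Real.sqrt_nonneg _)
  have step3 : Real.sqrt (2 * L) * (2 * Real.sqrt ((n-1 : ℕ) : ℝ)) ≤ 2 * Real.sqrt (2 * L * n) := by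
    rw [show Real.sqrt (2*L) * (2 * Real.sqrt ((n-1 : ℕ) : ℝ)) = 2 * (Real.sqrt (2*L) * Real.sqrt ((n-1 : ℕ) : ℝ)) by ring,
      ← Real.sqrt_mul (by positivity)]
    have h1 : (2:ℝ) * L * ((n-1 : ℕ) : ℝ) ≤ 2 * L * n := by
      apply mul_le_mul_of_nonneg_left _ (by positivity)
      exact_mod_cast Nat.cast_le.2 (Nat.sub_le n 1)
    linarith [Real.sqrt_le_sqrt h1]
  linarith



/-- Deterministic counting bound: for any selection function
`k : {1,…,S} → {1,…,K}`, with `N_j(s)` the number of rounds `u ∈ {1,…,s}` with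
`k(u) = j`, and `w(s) = 1` if `N_{k(s)}(s−1) = 0` and
`w(s) = min(√(2 log K / N_{k(s)}(s−1)), 1)` otherwise, one has
`Σ_{s=1}^S w(s) ≤ (1 + 2√2)·√(K S log K)`. -/
theorem selection_width_sum_bound
    (K S : ℕ) (hK : 2 ≤ K) (hSK : 4 * K ≤ S)
    (k : ℕ → ℕ) (hk : ∀ s ∈ Finset.Icc 1 S, k s ∈ Finset.Icc 1 K) :
    ∑ s ∈ Finset.Icc 1 S,
      (if ((Finset.Icc 1 (s - 1)).filter (fun u => k u = k s)).card = 0 then (1 : ℝ)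
       else min (Real.sqrt (2 * Real.log K /
          (((Finset.Icc 1 (s - 1)).filter (fun u => k u = k s)).card : ℝ))) 1)
      ≤ (1 + 2 * Real.sqrt 2) * Real.sqrt ((K : ℝ) * S * Real.log K) := by
  set L := Real.log K with hLdef
  have hL : 0 < L := Real.log_pos (by exact_mod_cast hK)
  set F : ℕ → ℝ := fun i => if i = 0 then (1:ℝ) else min (Real.sqrt (2 * L / i)) 1 with hF
  set A : ℕ → Finset ℕ := fun j => (Finset.Icc 1 S).filter (fun u => k u = j) with hA
  set n : ℕ → ℕ := fun j => (A j).card with hn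
  have hsum_n : ∑ j ∈ Finset.Icc 1 K, n j = S := by
    have := Finset.card_eq_sum_card_fiberwise hk
    simpa [Nat.card_Icc] using this.symm
  -- rewrite the sum fiberwise
  rw [← Finset.sum_fiberwise_of_maps_to hk]
  -- per-fiber computation
  have hfiber : ∀ j ∈ Finset.Icc 1 K,
      ∑ s ∈ A j,
        (if ((Finset.Icc 1 (s - 1)).filter (fun u => k u = k s)).card = 0 then (1 : ℝ)
         else min (Real.sqrt (2 * L /
            (((Finset.Icc 1 (s - 1)).filter (fun u => k u = k s)).card : ℝ))) 1)
      = ∑ i ∈ Finset.range (n j), F i := by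
    intro j hj
    rw [← rank_sum (A j) F]
    apply Finset.sum_congr rfl
    intro s hs
    have hsmem : s ∈ Finset.Icc 1 S := (Finset.mem_filter.1 hs).1
    have hks : k s = j := (Finset.mem_filter.1 hs).2
    have hs1 : 1 ≤ s := (Finset.mem_Icc.1 hsmem).1
    have hsS : s ≤ S := (Finset.mem_Icc.1 hsmem).2
    have hset : (Finset.Icc 1 (s - 1)).filter (fun u => k u = k s)
        = (A j).filter (fun u => u < s) := by
      ext x
      simp only [hA, Finset.mem_filter, Finset.mem_Icc, hks]
      constructor
      · rintro ⟨⟨h1, h2⟩, h3⟩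
        exact ⟨⟨⟨h1, by omega⟩, h3⟩, by omega⟩
      · rintro ⟨⟨⟨h1, h2⟩, h3⟩, h4⟩
        exact ⟨⟨h1, by omega⟩, h3⟩
    rw [hset]
  rw [Finset.sum_congr rfl hfiber]
  -- bound each fiber
  have h1 : ∑ j ∈ Finset.Icc 1 K, ∑ i ∈ Finset.range (n j), F i
      ≤ ∑ j ∈ Finset.Icc 1 K, (1 + 2 * Real.sqrt (2 * L * n j)) :=
    Finset.sum_le_sum fun j _ => arm_bound L hL.le (n j)
  have hsplit : ∑ j ∈ Finset.Icc 1 K, (1 + 2 * Real.sqrt (2 * L * n j))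
      = (K : ℝ) + 2 * Real.sqrt (2 * L) * ∑ j ∈ Finset.Icc 1 K, Real.sqrt (n j) := by
    rw [Finset.sum_add_distrib, Finset.sum_const, Nat.card_Icc]
    simp only [Nat.add_sub_cancel, nsmul_eq_mul, mul_one]
    rw [Finset.mul_sum]
    congr 1
    apply Finset.sum_congr rfl
    intro j _
    rw [Real.sqrt_mul (by positivity)]
    ring
  -- Cauchy-Schwarz
  have hCS : ∑ j ∈ Finset.Icc 1 K, Real.sqrt (n j) ≤ Real.sqrt ((K : ℝ) * S) := by
    rw [show ((K:ℝ) * S) = (∑ j ∈ Finset.Icc 1 K, (1:ℝ)^2) * ∑ j ∈ Finset.Icc 1 K, (Real.sqrt (n j))^2 by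
      simp only [one_pow, Finset.sum_const, Nat.card_Icc, Nat.add_sub_cancel, nsmul_eq_mul, mul_one]
      congr 1
      rw [← hsum_n]
      push_cast
      apply Finset.sum_congr rfl
      intro j _
      rw [Real.sq_sqrt (by positivity)]]
    apply Real.le_sqrt_of_sq_le
    calc (∑ j ∈ Finset.Icc 1 K, Real.sqrt (n j))^2
        = (∑ j ∈ Finset.Icc 1 K, 1 * Real.sqrt (n j))^2 := by simp
      _ ≤ _ := Finset.sum_mul_sq_le_sq_mul_sq _ _ _
  -- combine
  have hS' : (4:ℝ) * K ≤ S := by exact_mod_cast hSK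
  have hKpos : (0:ℝ) < K := by positivity
  have hlog4 : (1:ℝ)/4 ≤ L := by
    have h2 : Real.log 2 ≤ L := Real.log_le_log (by norm_num) (by exact_mod_cast hK)
    linarith [Real.log_two_gt_d9]
  have hKle : (K:ℝ) ≤ Real.sqrt ((K:ℝ) * S * L) := by
    apply Real.le_sqrt_of_sq_le
    have hKS : (K:ℝ) ≤ (S:ℝ) * L := by
      nlinarith [mul_le_mul hS' hlog4 (by norm_num : (0:ℝ) ≤ 1/4) (by positivity : (0:ℝ) ≤ (S:ℝ))]
    nlinarith
  have hsqrtcomb : Real.sqrt (2 * L) * Real.sqrt ((K:ℝ) * S)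
      = Real.sqrt 2 * Real.sqrt ((K:ℝ) * S * L) := by
    rw [← Real.sqrt_mul (by positivity), ← Real.sqrt_mul (by norm_num)]
    ring_nf
  have hfinal : (K : ℝ) + 2 * Real.sqrt (2 * L) * ∑ j ∈ Finset.Icc 1 K, Real.sqrt (n j)
      ≤ (1 + 2 * Real.sqrt 2) * Real.sqrt ((K : ℝ) * S * L) := by
    have h2 : 2 * Real.sqrt (2 * L) * ∑ j ∈ Finset.Icc 1 K, Real.sqrt (n j)
        ≤ 2 * Real.sqrt (2 * L) * Real.sqrt ((K : ℝ) * S) :=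
      mul_le_mul_of_nonneg_left hCS (by positivity)
    have h3 : 2 * Real.sqrt (2 * L) * Real.sqrt ((K : ℝ) * S)
        = 2 * Real.sqrt 2 * Real.sqrt ((K:ℝ) * S * L) := by
      rw [mul_assoc, hsqrtcomb]; ring
    nlinarith [Real.sqrt_nonneg ((K:ℝ) * S * L)]
  linarith
end
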